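/- arXiv:math/0306318 — 5 statements merged into one kernel-verified Lean document; each statement's English description precedes it below -/
import Mathlib

section
/- Let P be a minimal prime ideal of I_mn(2). Then none of the four corner variables x_{1,1}, x_{1,n}, x_{m,1}, x_{m,n} belongs to P. -/
open MvPolynomial

/-- The ideal of adjacent 2×2 minors of the generic `m × n` matrix. -/
noncomputable def adjMinors2Ideal (K : Type*) [Field K] (m n : ℕ) :
    Ideal (MvPolynomial (Fin m × Fin n) K) :=
  Ideal.span {f | ∃ (i j : ℕ) (hi : i + 1 < m) (hj : j + 1 < n),
    f = X (⟨i, by omega⟩, ⟨j, by omega⟩) * X (⟨i + 1, hi⟩, ⟨j + 1, hj⟩)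
      - X (⟨i, by omega⟩, ⟨j + 1, hj⟩) * X (⟨i + 1, hi⟩, ⟨j, by omega⟩)}

/-! A one-parameter family of substitutions `φ_t : R → R[t]` with `φ₀ = id` which maps an ideal
`I` into `P[t]`, for a minimal prime `P` of `I`, maps `P` itself into `P[t]`: the preimage of
`P[t]` is a prime containing `I` and contained in `P`.

Suppose `x₀₀ ∈ P`. The shear `x ↦ (1 + tE₀₁) x (1 + tE₁₀)` fixes every adjacent minor and sends
`x₀₀` to `x₀₀ + t (x₀₁ + x₁₀) + t² x₁₁`, so `x₁₁ ∈ P`. Then the shift `x₀₀ ↦ x₀₀ + t` changes only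
the corner minor, by `t x₁₁ ∈ P[t]`, so `x₀₀ + t ∈ P[t]`, i.e. `1 ∈ P`. The other corners follow by
reflecting rows and columns, which preserves the ideal. -/

theorem Ideal.comap_map_C_eq_of_mem_minimalPrimes {R : Type*} [CommRing R] {I P : Ideal R}
    (hP : P ∈ I.minimalPrimes) (φ : R →+* Polynomial R) (hφ : ∀ r, (φ r).eval 0 = r)
    (hI : I ≤ (P.map Polynomial.C).comap φ) : (P.map Polynomial.C).comap φ = P := by
  have := hP.1.1
  have hle : (P.map Polynomial.C).comap φ ≤ P := fun r hr => by
    simpa [Polynomial.coeff_zero_eq_eval_zero, hφ] using Ideal.mem_map_C_iff.1 hr 0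
  exact le_antisymm hle (hP.2 ⟨Ideal.IsPrime.comap φ, hI⟩ hle)

theorem Ideal.comap_mem_minimalPrimes_of_involutive {R : Type*} [CommRing R] {I P : Ideal R}
    (σ : R →+* R) (hσ : Function.Involutive σ) (hI : I ≤ I.comap σ)
    (hP : P ∈ I.minimalPrimes) :
    P.comap σ ∈ I.minimalPrimes := by
  have hcomap : I.comap σ = I := le_antisymm (fun x hx => by simpa [hσ x] using hI hx) hI
  simpa [hcomap] using Ideal.minimalPrimes_comap_of_surjective hσ.surjective hP

theorem MvPolynomial.rename_involutive {σ R : Type*} [CommSemiring R] {e : σ → σ}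
    (he : Function.Involutive e) : Function.Involutive (rename e : MvPolynomial σ R → _) :=
  fun p => by rw [rename_rename, he.comp_self, rename_id, AlgHom.id_apply]

namespace GenericMatrix

variable {K : Type*} {m n : ℕ}

section CommSemiring

variable [CommSemiring K]

-- Indexed by `ℕ` and zero outside the grid, so that index arithmetic needs no bound proofs.
noncomputable def entry (i j : ℕ) : MvPolynomial (Fin m × Fin n) K :=
  if h : i < m ∧ j < n then X (⟨i, h.1⟩, ⟨j, h.2⟩) else 0

theorem entry_of_lt {i j : ℕ} (hi : i < m) (hj : j < n) :
    (entry i j : MvPolynomial (Fin m × Fin n) K) = X (⟨i, hi⟩, ⟨j, hj⟩) :=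
  dif_pos ⟨hi, hj⟩

theorem rename_rowRev_entry {i : ℕ} (hi : i < m) (j : ℕ) :
    rename (Prod.map Fin.rev id) (entry i j : MvPolynomial (Fin m × Fin n) K)
      = entry (m - 1 - i) j := by
  by_cases hj : j < n
  · rw [entry_of_lt hi hj, entry_of_lt (by omega) hj, rename_X]
    exact congrArg X (Prod.ext (Fin.ext (by simp only [Prod.map_fst, Fin.val_rev]; omega)) rfl)
  · simp [entry, hj]

theorem rename_colRev_entry (i : ℕ) {j : ℕ} (hj : j < n) :
    rename (Prod.map id Fin.rev) (entry i j : MvPolynomial (Fin m × Fin n) K)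
      = entry i (n - 1 - j) := by
  by_cases hi : i < m
  · rw [entry_of_lt hi hj, entry_of_lt hi (by omega), rename_X]
    exact congrArg X (Prod.ext rfl (Fin.ext (by simp only [Prod.map_snd, Fin.val_rev]; omega)))
  · simp [entry, hi]

end CommSemiring

section CommRing

variable [CommRing K]

noncomputable def adjMinor (i j : ℕ) : MvPolynomial (Fin m × Fin n) K :=
  entry i j * entry (i + 1) (j + 1) - entry i (j + 1) * entry (i + 1) j

theorem rename_rowRev_adjMinor {i : ℕ} (hi : i + 1 < m) (j : ℕ) :
    rename (Prod.map Fin.rev id) (adjMinor i j : MvPolynomial (Fin m × Fin n) K)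
      = -adjMinor (m - 2 - i) j := by
  have e1 : m - 1 - i = m - 2 - i + 1 := by omega
  have e2 : m - 1 - (i + 1) = m - 2 - i := by omega
  simp only [adjMinor, map_sub, map_mul, rename_rowRev_entry (show i < m by omega),
    rename_rowRev_entry hi, e1, e2]
  ring

theorem rename_colRev_adjMinor (i : ℕ) {j : ℕ} (hj : j + 1 < n) :
    rename (Prod.map id Fin.rev) (adjMinor i j : MvPolynomial (Fin m × Fin n) K)
      = -adjMinor i (n - 2 - j) := by
  have e1 : n - 1 - j = n - 2 - j + 1 := by omega
  have e2 : n - 1 - (j + 1) = n - 2 - j := by omega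
  simp only [adjMinor, map_sub, map_mul, rename_colRev_entry _ (show j < n by omega),
    rename_colRev_entry _ hj, e1, e2]
  ring

noncomputable def substEntries (G : ℕ → ℕ → Polynomial (MvPolynomial (Fin m × Fin n) K)) :
    MvPolynomial (Fin m × Fin n) K →ₐ[K] Polynomial (MvPolynomial (Fin m × Fin n) K) :=
  aeval fun p => G p.1 p.2

variable {G : ℕ → ℕ → Polynomial (MvPolynomial (Fin m × Fin n) K)}

theorem substEntries_entry {i j : ℕ} (hi : i < m) (hj : j < n) :
    substEntries G (entry i j) = G i j := by
  rw [entry_of_lt hi hj, substEntries, aeval_X]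

theorem substEntries_adjMinor {i j : ℕ} (hi : i + 1 < m) (hj : j + 1 < n) :
    substEntries G (adjMinor i j) = G i j * G (i + 1) (j + 1) - G i (j + 1) * G (i + 1) j := by
  have hi' : i < m := by omega
  have hj' : j < n := by omega
  simp only [adjMinor, map_sub, map_mul, substEntries_entry hi' hj', substEntries_entry hi hj,
    substEntries_entry hi hj', substEntries_entry hi' hj]

theorem eval_zero_substEntries (hG : ∀ i j, (G i j).eval 0 = entry i j)
    (r : MvPolynomial (Fin m × Fin n) K) : (substEntries G r).eval 0 = r := by
  induction r using MvPolynomial.induction_on with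
  | C a => simp [substEntries]
  | add p q hp hq => simp [hp, hq]
  | mul_X p x hp =>
    rw [map_mul, Polynomial.eval_mul, hp, substEntries, aeval_X, hG,
      entry_of_lt x.1.isLt x.2.isLt]

/-- Entries of `(1 + t E₀₁) x (1 + t E₁₀)`: `t` times row `1` is added to row `0`, and `t`
times column `1` to column `0`. -/
noncomputable def shearEntry (i j : ℕ) : Polynomial (MvPolynomial (Fin m × Fin n) K) :=
  Polynomial.C (entry i j)
    + Polynomial.C ((if i = 0 then entry 1 j else 0) + (if j = 0 then entry i 1 else 0))
      * Polynomial.X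
    + Polynomial.C (if i = 0 ∧ j = 0 then entry 1 1 else 0) * Polynomial.X ^ 2

theorem shearEntry_minor (i j : ℕ) :
    shearEntry i j * shearEntry (i + 1) (j + 1) - shearEntry i (j + 1) * shearEntry (i + 1) j
      = Polynomial.C (adjMinor i j : MvPolynomial (Fin m × Fin n) K) := by
  rcases i with _ | i <;> rcases j with _ | j <;> simp [shearEntry, adjMinor] <;> ring

noncomputable def cornerShiftEntry (i j : ℕ) : Polynomial (MvPolynomial (Fin m × Fin n) K) :=
  Polynomial.C (entry i j) + if i = 0 ∧ j = 0 then Polynomial.X else 0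

theorem cornerShiftEntry_minor (i j : ℕ) :
    cornerShiftEntry i j * cornerShiftEntry (i + 1) (j + 1)
        - cornerShiftEntry i (j + 1) * cornerShiftEntry (i + 1) j
      = Polynomial.C (adjMinor i j : MvPolynomial (Fin m × Fin n) K)
        + if i = 0 ∧ j = 0 then Polynomial.C (entry 1 1) * Polynomial.X else 0 := by
  rcases i with _ | i <;> rcases j with _ | j
  · simp [cornerShiftEntry, adjMinor]
    ring
  all_goals simp [cornerShiftEntry, adjMinor]

end CommRing

section Field

variable [Field K]

theorem adjMinor_mem_adjMinors2Ideal {i j : ℕ} (hi : i + 1 < m) (hj : j + 1 < n) :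
    adjMinor i j ∈ adjMinors2Ideal K m n := by
  rw [adjMinor, entry_of_lt (show i < m by omega) (show j < n by omega), entry_of_lt hi hj,
    entry_of_lt (show i < m by omega) hj, entry_of_lt hi (show j < n by omega)]
  exact Ideal.subset_span ⟨i, j, hi, hj, rfl⟩

theorem adjMinors2Ideal_le_comap {S : Type*} [CommRing S]
    (φ : MvPolynomial (Fin m × Fin n) K →+* S) (J : Ideal S)
    (h : ∀ i j, i + 1 < m → j + 1 < n → φ (adjMinor i j) ∈ J) :
    adjMinors2Ideal K m n ≤ J.comap φ := by
  rw [adjMinors2Ideal, Ideal.span_le]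
  rintro _ ⟨i, j, hi, hj, rfl⟩
  simpa [adjMinor, entry_of_lt, hi, hj, show i < m by omega, show j < n by omega]
    using h i j hi hj

variable {P : Ideal (MvPolynomial (Fin m × Fin n) K)}

theorem comap_rename_rowRev_mem_minimalPrimes (hP : P ∈ (adjMinors2Ideal K m n).minimalPrimes) :
    P.comap (rename (Prod.map Fin.rev id)).toRingHom ∈ (adjMinors2Ideal K m n).minimalPrimes :=
  Ideal.comap_mem_minimalPrimes_of_involutive _
    (rename_involutive (Fin.rev_involutive.prodMap fun _ => rfl))
    (adjMinors2Ideal_le_comap _ _ fun i j hi hj => by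
      simpa [rename_rowRev_adjMinor hi] using
        adjMinor_mem_adjMinors2Ideal (K := K) (show m - 2 - i + 1 < m by omega) hj) hP

theorem comap_rename_colRev_mem_minimalPrimes (hP : P ∈ (adjMinors2Ideal K m n).minimalPrimes) :
    P.comap (rename (Prod.map id Fin.rev)).toRingHom ∈ (adjMinors2Ideal K m n).minimalPrimes :=
  Ideal.comap_mem_minimalPrimes_of_involutive _
    (rename_involutive (Function.Involutive.prodMap (fun _ => rfl) Fin.rev_involutive))
    (adjMinors2Ideal_le_comap _ _ fun i j hi hj => by
      simpa [rename_colRev_adjMinor _ hj] using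
        adjMinor_mem_adjMinors2Ideal (K := K) hi (show n - 2 - j + 1 < n by omega)) hP

theorem substEntries_mem_map_C_of_mem_minimalPrimes
    (hP : P ∈ (adjMinors2Ideal K m n).minimalPrimes)
    {G : ℕ → ℕ → Polynomial (MvPolynomial (Fin m × Fin n) K)}
    (hG : ∀ i j, (G i j).eval 0 = entry i j)
    (hGP : ∀ i j, i + 1 < m → j + 1 < n →
      G i j * G (i + 1) (j + 1) - G i (j + 1) * G (i + 1) j ∈ P.map Polynomial.C)
    {i j : ℕ} (hi : i < m) (hj : j < n) (h : entry i j ∈ P) : G i j ∈ P.map Polynomial.C := by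
  have hker := Ideal.comap_map_C_eq_of_mem_minimalPrimes hP (substEntries G).toRingHom
    (eval_zero_substEntries hG) (adjMinors2Ideal_le_comap _ _ fun i j hi hj => by
      simpa [substEntries_adjMinor hi hj] using hGP i j hi hj)
  rw [← hker, Ideal.mem_comap] at h
  simpa [substEntries_entry hi hj] using h

theorem entry_zero_zero_not_mem (hm : 0 < m) (hn : 0 < n)
    (hP : P ∈ (adjMinors2Ideal K m n).minimalPrimes) : entry 0 0 ∉ P := by
  intro h00
  have h11 : entry 1 1 ∈ P := by
    have hshear := substEntries_mem_map_C_of_mem_minimalPrimes (G := shearEntry) hP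
      (fun i j => by simp [shearEntry])
      (fun i j hi hj => by
        rw [shearEntry_minor]
        exact Ideal.mem_map_of_mem _ (hP.1.2 (adjMinor_mem_adjMinors2Ideal hi hj))) hm hn h00
    simpa [shearEntry] using Ideal.mem_map_C_iff.1 hshear 2
  have hshift := substEntries_mem_map_C_of_mem_minimalPrimes (G := cornerShiftEntry) hP
    (fun i j => by simp [cornerShiftEntry, apply_ite])
    (fun i j hi hj => by
      rw [cornerShiftEntry_minor]
      refine add_mem (Ideal.mem_map_of_mem _ (hP.1.2 (adjMinor_mem_adjMinors2Ideal hi hj))) ?_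
      split_ifs
      · exact Ideal.mul_mem_right _ _ (Ideal.mem_map_of_mem _ h11)
      · exact zero_mem _) hm hn h00
  exact hP.1.1.one_notMem (by simpa [cornerShiftEntry] using Ideal.mem_map_C_iff.1 hshift 1)

end Field

end GenericMatrix

open GenericMatrix

/-- no corner variable belongs to a minimal prime of the ideal of
adjacent 2×2 minors. -/
theorem corner_vars_not_mem_minimal_prime
    (K : Type*) [Field K] (m n : ℕ) (hm : 2 ≤ m) (hn : 2 ≤ n)
    (P : Ideal (MvPolynomial (Fin m × Fin n) K))
    (hP : P ∈ (adjMinors2Ideal K m n).minimalPrimes) :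
    X ((⟨0, by omega⟩ : Fin m), (⟨0, by omega⟩ : Fin n)) ∉ P ∧
    X ((⟨0, by omega⟩ : Fin m), (⟨n - 1, by omega⟩ : Fin n)) ∉ P ∧
    X ((⟨m - 1, by omega⟩ : Fin m), (⟨0, by omega⟩ : Fin n)) ∉ P ∧
    X ((⟨m - 1, by omega⟩ : Fin m), (⟨n - 1, by omega⟩ : Fin n)) ∉ P := by
  have hm0 : 0 < m := by omega
  have hn0 : 0 < n := by omega
  have hPr := comap_rename_rowRev_mem_minimalPrimes hP
  have hPc := comap_rename_colRev_mem_minimalPrimes hP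
  have hPrc := comap_rename_colRev_mem_minimalPrimes hPr
  refine ⟨?_, ?_, ?_, ?_⟩
  · simpa [entry_of_lt hm0 hn0] using entry_zero_zero_not_mem hm0 hn0 hP
  · simpa [rename_colRev_entry _ hn0, entry_of_lt hm0 (show n - 1 < n by omega)]
      using entry_zero_zero_not_mem hm0 hn0 hPc
  · simpa [rename_rowRev_entry hm0, entry_of_lt (show m - 1 < m by omega) hn0]
      using entry_zero_zero_not_mem hm0 hn0 hPr
  · simpa [rename_colRev_entry _ hn0, rename_rowRev_entry hm0,
      entry_of_lt (show m - 1 < m by omega) (show n - 1 < n by omega)]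
      using entry_zero_zero_not_mem hm0 hn0 hPrc
end

section
/- Let P be a minimal prime ideal of I_mn(2), and let N_P be the set of grid positions (i,j) with x_{ij} ∉ P. Then every connected component of N_P (under the adjacency in which (i,j) and (s,t) are adjacent when |i−s| ≤ 1 and |j−t| ≤ 1) is a rectangle, i.e., a set of the form {i,…,s}×{j,…,t}. -/
open MvPolynomial

/-- Two grid positions are adjacent if their coordinates differ by at most 1. -/
def gridAdj {m n : ℕ} (p q : Fin m × Fin n) : Prop :=
  p.1.1 ≤ q.1.1 + 1 ∧ q.1.1 ≤ p.1.1 + 1 ∧ p.2.1 ≤ q.2.1 + 1 ∧ q.2.1 ≤ p.2.1 + 1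

/-- A set of grid positions is connected if any two of its elements are joined by a
path inside the set whose consecutive positions are adjacent. -/
def ConnectedIn {m n : ℕ} (A : Set (Fin m × Fin n)) : Prop :=
  ∀ p ∈ A, ∀ q ∈ A,
    Relation.ReflTransGen (fun x y => gridAdj x y ∧ x ∈ A ∧ y ∈ A) p q

/-- `T` is a connected component of `N`: a maximal connected subset. -/
def IsComponent {m n : ℕ} (N T : Set (Fin m × Fin n)) : Prop :=
  T.Nonempty ∧ T ⊆ N ∧ ConnectedIn T ∧
    ∀ T', T ⊆ T' → T' ⊆ N → ConnectedIn T' → T' = T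

/-- A rectangle of grid positions. -/
def IsRect {m n : ℕ} (T : Set (Fin m × Fin n)) : Prop :=
  ∃ i s j t : ℕ,
    T = {p : Fin m × Fin n | i ≤ p.1.1 ∧ p.1.1 ≤ s ∧ j ≤ p.2.1 ∧ p.2.1 ≤ t}

/-- The boundary of a set of grid positions: positions outside of it that are
adjacent to some position in it. -/
def gridBdry {m n : ℕ} (T : Set (Fin m × Fin n)) : Set (Fin m × Fin n) :=
  {p | p ∉ T ∧ ∃ q ∈ T, gridAdj p q}

/-- The set of positions whose variable lies in `P`. -/
def SP {K : Type*} [Field K] {m n : ℕ} (P : Ideal (MvPolynomial (Fin m × Fin n) K)) :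
    Set (Fin m × Fin n) := {p | X p ∈ P}

/-- The set of positions whose variable does not lie in `P`. -/
def NP {K : Type*} [Field K] {m n : ℕ} (P : Ideal (MvPolynomial (Fin m × Fin n) K)) :
    Set (Fin m × Fin n) := {p | X p ∉ P}

/-!
For a prime `P` containing the adjacent minors, the relation `x_p x_q ≡ x_{p'} x_{q'} (mod P)`
on every adjacent `2 × 2` block shows that whenever two diagonally adjacent positions lie in
`N_P`, so do the two other corners of their block. A component `T` of `N_P` inherits this
closure property, since those corners are adjacent to `T`. Following a path inside `T` from `p`
to `q`, each step enlarges the rectangle spanned by `p` and the current position by at most one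
row and one column, and the closure property fills the new row and column one cell at a time.
Hence `T` contains the rectangle spanned by any two of its positions, so it is the rectangle
spanned by its extreme rows and columns.
-/

section Grid

variable {m n : ℕ}

theorem gridAdj_symm {p q : Fin m × Fin n} (h : gridAdj p q) : gridAdj q p :=
  ⟨h.2.1, h.1, h.2.2.2, h.2.2.1⟩

def CornerClosed (S : Set (Fin m × Fin n)) : Prop :=
  ∀ p ∈ S, ∀ q ∈ S, gridAdj p q → (p.1, q.2) ∈ S

def rectSpan (p q : Fin m × Fin n) : Set (Fin m × Fin n) :=
  {x | min p.1.1 q.1.1 ≤ x.1.1 ∧ x.1.1 ≤ max p.1.1 q.1.1 ∧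
    min p.2.1 q.2.1 ≤ x.2.1 ∧ x.2.1 ≤ max p.2.1 q.2.1}

theorem Nat.forall_of_iff_succ {P : ℕ → Prop} {lo hi k j : ℕ}
    (hstep : ∀ i, lo ≤ i → i < hi → (P i ↔ P (i + 1)))
    (hk : lo ≤ k ∧ k ≤ hi) (hPk : P k) (hj : lo ≤ j ∧ j ≤ hi) : P j := by
  have hlo : ∀ i, lo ≤ i → i ≤ hi → (P i ↔ P lo) := by
    intro i hli
    induction i, hli using Nat.le_induction with
    | base => exact fun _ => Iff.rfl
    | succ i hli ih => exact fun hle => (hstep i hli (by omega)).symm.trans (ih (by omega))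
  exact (hlo j hj.1 hj.2).2 ((hlo k hk.1 hk.2).1 hPk)

namespace CornerClosed

variable {T : Set (Fin m × Fin n)}

theorem row_fill (hT : CornerClosed T) {u v : Fin m} (huv : u.1 ≤ v.1 + 1 ∧ v.1 ≤ u.1 + 1)
    {lo hi : ℕ} (hhi : hi < n) (hu : ∀ j : Fin n, lo ≤ j.1 → j.1 ≤ hi → (u, j) ∈ T)
    {z : Fin n} (hz : lo ≤ z.1 ∧ z.1 ≤ hi) (hvz : (v, z) ∈ T)
    (j : Fin n) (hj : lo ≤ j.1 ∧ j.1 ≤ hi) : (v, j) ∈ T := by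
  refine Nat.forall_of_iff_succ (P := fun i => ∀ h : i < n, (v, (⟨i, h⟩ : Fin n)) ∈ T)
    (fun i hlo hi => ⟨fun hv h => ?_, fun hv h => ?_⟩) hz (fun _ => hvz) hj j.2
  · exact hT _ (hv (by omega)) _ (hu ⟨i + 1, h⟩ (by dsimp only; omega) (by dsimp only; omega))
      ⟨huv.2, huv.1, by dsimp only; omega, by dsimp only; omega⟩
  · exact hT _ (hv (by omega)) _ (hu ⟨i, h⟩ hlo (by dsimp only; omega))
      ⟨huv.2, huv.1, by dsimp only; omega, by dsimp only; omega⟩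

theorem col_fill (hT : CornerClosed T) {u v : Fin n} (huv : u.1 ≤ v.1 + 1 ∧ v.1 ≤ u.1 + 1)
    {lo hi : ℕ} (hhi : hi < m) (hu : ∀ i : Fin m, lo ≤ i.1 → i.1 ≤ hi → (i, u) ∈ T)
    {z : Fin m} (hz : lo ≤ z.1 ∧ z.1 ≤ hi) (hvz : (z, v) ∈ T)
    (i : Fin m) (hmem : lo ≤ i.1 ∧ i.1 ≤ hi) : (i, v) ∈ T := by
  refine Nat.forall_of_iff_succ (P := fun k => ∀ h : k < m, ((⟨k, h⟩ : Fin m), v) ∈ T)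
    (fun k hlo hk => ⟨fun hv h => ?_, fun hv h => ?_⟩) hz (fun _ => hvz) hmem i.2
  · exact hT _ (hu ⟨k + 1, h⟩ (by dsimp only; omega) (by dsimp only; omega)) _ (hv (by omega))
      ⟨by dsimp only; omega, by dsimp only; omega, huv.1, huv.2⟩
  · exact hT _ (hu ⟨k, h⟩ hlo (by dsimp only; omega)) _ (hv (by omega))
      ⟨by dsimp only; omega, by dsimp only; omega, huv.1, huv.2⟩

theorem rectSpan_subset_of_gridAdj (hT : CornerClosed T) {p q q' : Fin m × Fin n}
    (hpq : rectSpan p q ⊆ T) (hq' : q' ∈ T) (hqq' : gridAdj q q') : rectSpan p q' ⊆ T := by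
  obtain ⟨h₁, h₂, h₃, h₄⟩ := hqq'
  have hq : q ∈ T := hpq ⟨by omega, by omega, by omega, by omega⟩
  have hrow : ∀ j : Fin n, min p.2.1 q.2.1 ≤ j.1 ∧ j.1 ≤ max p.2.1 q.2.1 → (q'.1, j) ∈ T :=
    hT.row_fill ⟨h₁, h₂⟩ (max_lt p.2.2 q.2.2)
      (fun j hj₁ hj₂ => hpq ⟨by dsimp only; omega, by dsimp only; omega, hj₁, hj₂⟩)
      ⟨min_le_right _ _, le_max_right _ _⟩ (hT q' hq' q hq ⟨h₂, h₁, h₄, h₃⟩)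
  have hcol : ∀ i : Fin m, min p.1.1 q.1.1 ≤ i.1 ∧ i.1 ≤ max p.1.1 q.1.1 → (i, q'.2) ∈ T :=
    hT.col_fill ⟨h₃, h₄⟩ (max_lt p.1.2 q.1.2)
      (fun i hi₁ hi₂ => hpq ⟨hi₁, hi₂, by dsimp only; omega, by dsimp only; omega⟩)
      ⟨min_le_right _ _, le_max_right _ _⟩ (hT q hq q' hq' ⟨h₁, h₂, h₃, h₄⟩)
  rintro ⟨i, j⟩ ⟨hi₁, hi₂, hj₁, hj₂⟩
  dsimp only at hi₁ hi₂ hj₁ hj₂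
  have hi : (min p.1.1 q.1.1 ≤ i.1 ∧ i.1 ≤ max p.1.1 q.1.1) ∨ i = q'.1 := by
    rw [Fin.ext_iff]; omega
  have hj : (min p.2.1 q.2.1 ≤ j.1 ∧ j.1 ≤ max p.2.1 q.2.1) ∨ j = q'.2 := by
    rw [Fin.ext_iff]; omega
  rcases hi with hi | rfl <;> rcases hj with hj | rfl
  · exact hpq ⟨hi.1, hi.2, hj.1, hj.2⟩
  · exact hcol i hi
  · exact hrow j hj
  · exact hq'

end CornerClosed

theorem ConnectedIn.rectSpan_subset {T : Set (Fin m × Fin n)} (hc : ConnectedIn T)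
    (hT : CornerClosed T) {p q : Fin m × Fin n} (hp : p ∈ T) (hq : q ∈ T) :
    rectSpan p q ⊆ T := by
  have hpath := hc p hp q hq
  clear hq
  induction hpath with
  | refl =>
    rintro x ⟨h₁, h₂, h₃, h₄⟩
    convert hp using 1
    ext <;> simp only [min_self, max_self] at * <;> omega
  | tail _ hstep ih => exact hT.rectSpan_subset_of_gridAdj ih hstep.2.2 hstep.1

theorem IsComponent.mem_of_gridAdj {N T : Set (Fin m × Fin n)} (hT : IsComponent N T)
    {p c : Fin m × Fin n} (hp : p ∈ T) (hc : c ∈ N) (hpc : gridAdj p c) : c ∈ T := by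
  have lift : ∀ x ∈ T, ∀ y ∈ T, Relation.ReflTransGen
      (fun a b => gridAdj a b ∧ a ∈ insert c T ∧ b ∈ insert c T) x y := fun x hx y hy =>
    Relation.ReflTransGen.mono (fun _ _ h => ⟨h.1, Or.inr h.2.1, Or.inr h.2.2⟩) _ _
      (hT.2.2.1 x hx y hy)
  have hconn : ConnectedIn (insert c T) := by
    rintro x (rfl | hx) y (rfl | hy)
    · rfl
    · exact .head ⟨gridAdj_symm hpc, Or.inl rfl, Or.inr hp⟩ (lift p hp y hy)
    · exact .tail (lift x hx p hp) ⟨hpc, Or.inr hp, Or.inl rfl⟩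
    · exact lift x hx y hy
  rw [← hT.2.2.2 _ (Set.subset_insert c T) (Set.insert_subset hc hT.2.1) hconn]
  exact Set.mem_insert c T

theorem IsComponent.cornerClosed {N T : Set (Fin m × Fin n)} (hT : IsComponent N T)
    (hN : CornerClosed N) : CornerClosed T := fun p hp q hq hpq =>
  hT.mem_of_gridAdj hp (hN p (hT.2.1 hp) q (hT.2.1 hq) hpq)
    ⟨Nat.le_succ _, Nat.le_succ _, hpq.2.2.1, hpq.2.2.2⟩

theorem isRect_of_rectSpan_subset {T : Set (Fin m × Fin n)} (hne : T.Nonempty)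
    (hT : ∀ p ∈ T, ∀ q ∈ T, rectSpan p q ⊆ T) : IsRect T := by
  obtain ⟨a, ha, ha'⟩ := T.exists_min_image (fun p => p.1.1) T.toFinite hne
  obtain ⟨b, hb, hb'⟩ := T.exists_max_image (fun p => p.1.1) T.toFinite hne
  obtain ⟨c, hc, hc'⟩ := T.exists_min_image (fun p => p.2.1) T.toFinite hne
  obtain ⟨d, hd, hd'⟩ := T.exists_max_image (fun p => p.2.1) T.toFinite hne
  have hac : (a.1, c.2) ∈ T := hT a ha c hc
    ⟨min_le_left _ _, le_max_left _ _, min_le_right _ _, le_max_right _ _⟩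
  have hbd : (b.1, d.2) ∈ T := hT b hb d hd
    ⟨min_le_left _ _, le_max_left _ _, min_le_right _ _, le_max_right _ _⟩
  refine ⟨a.1, b.1, c.2, d.2, Set.Subset.antisymm
    (fun x hx => ⟨ha' x hx, hb' x hx, hc' x hx, hd' x hx⟩) fun x ⟨h₁, h₂, h₃, h₄⟩ => ?_⟩
  exact hT _ hac _ hbd ⟨by dsimp only; omega, by dsimp only; omega, by dsimp only; omega,
    by dsimp only; omega⟩

theorem X_mul_X_sub_mem_adjMinors2Ideal (K : Type*) [Field K] {p q : Fin m × Fin n}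
    (h₁ : q.1.1 = p.1.1 + 1) (h₂ : q.2.1 = p.2.1 + 1 ∨ p.2.1 = q.2.1 + 1) :
    (X p * X q - X (p.1, q.2) * X (q.1, p.2) : MvPolynomial (Fin m × Fin n) K) ∈
      adjMinors2Ideal K m n := by
  obtain ⟨⟨i, hi⟩, ⟨j, hj⟩⟩ := p
  obtain ⟨⟨i', hi'⟩, ⟨j', hj'⟩⟩ := q
  dsimp only at h₁ h₂ ⊢
  subst h₁
  rcases h₂ with rfl | rfl
  · exact Ideal.subset_span ⟨i, j, hi', hj', rfl⟩
  · rw [← neg_sub]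
    exact neg_mem (Ideal.subset_span ⟨i, j', hi', hj, rfl⟩)

theorem cornerClosed_NP {K : Type*} [Field K] {P : Ideal (MvPolynomial (Fin m × Fin n) K)}
    (hP : P.IsPrime) (hle : adjMinors2Ideal K m n ≤ P) : CornerClosed (NP P) := by
  intro p hp q hq ⟨h₁, h₂, h₃, h₄⟩
  by_cases hrow : p.1 = q.1
  · rwa [hrow]
  by_cases hcol : p.2 = q.2
  · rwa [← hcol]
  rw [Fin.ext_iff] at hrow hcol
  have hdiag : X p * X q - X (p.1, q.2) * X (q.1, p.2) ∈ P := by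
    rcases (show q.1.1 = p.1.1 + 1 ∨ p.1.1 = q.1.1 + 1 by omega) with h | h
    · exact hle (X_mul_X_sub_mem_adjMinors2Ideal K h (by omega))
    · convert hle (X_mul_X_sub_mem_adjMinors2Ideal K h (by omega)) using 1
      ring
  intro hcorner
  have hpq : X p * X q ∈ P := by
    simpa only [sub_add_cancel] using P.add_mem hdiag (P.mul_mem_right (X (q.1, p.2)) hcorner)
  exact (hP.mem_or_mem hpq).elim hp hq

end Grid

theorem component_of_NP_isRect_general
    (K : Type*) [Field K] (m n : ℕ)
    (P : Ideal (MvPolynomial (Fin m × Fin n) K))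
    (hP : P ∈ (adjMinors2Ideal K m n).minimalPrimes)
    (T : Set (Fin m × Fin n)) (hT : IsComponent (NP P) T) :
    IsRect T := by
  have hTc : CornerClosed T := hT.cornerClosed (cornerClosed_NP hP.1.1 hP.1.2)
  exact isRect_of_rectSpan_subset hT.1 fun p hp q hq => hT.2.2.1.rectSpan_subset hTc hp hq

/-- every connected component of `N_P` is a rectangle, for `P` a
minimal prime of the ideal of adjacent 2×2 minors. -/
theorem component_of_NP_isRect
    (K : Type*) [Field K] (m n : ℕ) (hm : 2 ≤ m) (hn : 2 ≤ n)
    (P : Ideal (MvPolynomial (Fin m × Fin n) K))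
    (hP : P ∈ (adjMinors2Ideal K m n).minimalPrimes)
    (T : Set (Fin m × Fin n)) (hT : IsComponent (NP P) T) :
    IsRect T :=
  component_of_NP_isRect_general K m n P hP T hT
end

section
/- Let P be a minimal prime ideal of I_mn(2) and let T = X[i,j;s,t] be a connected component of N_P (which is necessarily a rectangle). Then the boundary of T is contained in S_P, and for each boundary edge E of T there exists another connected component T' of N_P, T' ≠ T, whose boundary has nonempty intersection with E. -/
/-!
The first claim is maximality of components: a position of `N_P` adjacent to a component would
enlarge it.

For the second, suppose the edge `E` of `T` meets the boundary of no other component. Then every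
position adjacent to `E` and outside `T` lies in `S_P`, since otherwise its own component would
have a boundary point in `E`. Move `E` by a symmetry of `ℤ²` to the segment `{0} × [0, ℓ]`, with
`T` continuing in row `1`, and substitute `t · x_{1,v}` for the variable `x_{0,v}` of the segment.
Because the whole neighbourhood of the segment outside `T` vanishes modulo `P`, every adjacent
minor still vanishes, so this defines a map `R → (R/P)[t]` killing `I_mn(2)` and reducing to
`R → R/P` at `t = 0`. Its kernel is a prime between `I_mn(2)` and `P`, hence equal to `P` by
minimality; but it misses `x_{0,0} ∈ P`, whose image `t · x_{1,0}` is nonzero as `(1, 0) ∈ T`.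
-/

open MvPolynomial

/-- `E` is a boundary edge of the rectangle `T`. -/
def IsBdryEdge {m n : ℕ} (T E : Set (Fin m × Fin n)) : Prop :=
  ∃ i s j t : ℕ,
    T = {p : Fin m × Fin n | i ≤ p.1.1 ∧ p.1.1 ≤ s ∧ j ≤ p.2.1 ∧ p.2.1 ≤ t} ∧
    E.Nonempty ∧
    (E = {p : Fin m × Fin n | p.1.1 + 1 = i ∧ j ≤ p.2.1 ∧ p.2.1 ≤ t} ∨
     E = {p : Fin m × Fin n | p.1.1 = s + 1 ∧ j ≤ p.2.1 ∧ p.2.1 ≤ t} ∨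
     E = {p : Fin m × Fin n | i ≤ p.1.1 ∧ p.1.1 ≤ s ∧ p.2.1 + 1 = j} ∨
     E = {p : Fin m × Fin n | i ≤ p.1.1 ∧ p.1.1 ≤ s ∧ p.2.1 = t + 1})

theorem Ideal.le_ker_of_mem_minimalPrimes {R S T : Type*} [CommRing R] [CommRing S] [IsDomain S]
    [CommRing T] {I P : Ideal R} (hP : P ∈ I.minimalPrimes) (φ : R →+* S)
    (hI : I ≤ RingHom.ker φ) (ψ : S →+* T) (hψ : RingHom.ker (ψ.comp φ) ≤ P) :
    P ≤ RingHom.ker φ :=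
  hP.2 ⟨RingHom.ker_isPrime φ, hI⟩ fun _ h ↦ hψ (by simp [RingHom.mem_ker.mp h])

section AdjMinors

variable {A : Type*}

def AdjMinorsVanish [Mul A] (x : ℤ × ℤ → A) : Prop :=
  ∀ a b : ℤ, x (a, b) * x (a + 1, b + 1) = x (a, b + 1) * x (a + 1, b)

def negFst : Equiv.Perm (ℤ × ℤ) := (Equiv.neg ℤ).prodCongr (Equiv.refl ℤ)

@[simp]
lemma negFst_apply (z : ℤ × ℤ) : negFst z = (-z.1, z.2) := rfl

def gridGenerators : Set (Equiv.Perm (ℤ × ℤ)) :=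
  insert (Equiv.prodComm ℤ ℤ) (insert negFst (Set.range Equiv.addRight))

def gridSymmetries : Subgroup (Equiv.Perm (ℤ × ℤ)) := Subgroup.closure gridGenerators

lemma inv_mem_gridGenerators {ρ : Equiv.Perm (ℤ × ℤ)} (hρ : ρ ∈ gridGenerators) :
    ρ⁻¹ ∈ gridGenerators := by
  rcases hρ with rfl | rfl | ⟨c, rfl⟩
  · exact Or.inl rfl
  · exact Or.inr (Or.inl (Equiv.ext fun z ↦ by simp [negFst, Equiv.Perm.inv_def]))
  · exact Or.inr (Or.inr ⟨-c, by simp [Equiv.Perm.inv_def]⟩)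

lemma AdjMinorsVanish.comp_of_mem_gridGenerators [CommMagma A] {x : ℤ × ℤ → A}
    (hx : AdjMinorsVanish x) {ρ : Equiv.Perm (ℤ × ℤ)} (hρ : ρ ∈ gridGenerators) :
    AdjMinorsVanish (x ∘ ρ) := by
  intro a b
  rcases hρ with rfl | rfl | ⟨⟨c, d⟩, rfl⟩
  · show x (b, a) * x (b + 1, a + 1) = x (b + 1, a) * x (b, a + 1)
    rw [hx b a, mul_comm]
  · have h := hx (-a - 1) b
    rw [sub_add_cancel] at h
    show x (-a, b) * x (-(a + 1), b + 1) = x (-a, b + 1) * x (-(a + 1), b)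
    rw [neg_add', mul_comm, ← h, mul_comm]
  · simp only [Function.comp_apply, Equiv.coe_addRight, Prod.mk_add_mk]
    rw [add_right_comm a 1 c, add_right_comm b 1 d]
    exact hx _ _

lemma AdjMinorsVanish.comp_of_mem_gridSymmetries [CommMagma A] {x : ℤ × ℤ → A}
    (hx : AdjMinorsVanish x) {ρ : Equiv.Perm (ℤ × ℤ)} (hρ : ρ ∈ gridSymmetries) :
    AdjMinorsVanish (x ∘ ρ) := by
  induction hρ using Subgroup.closure_induction'' generalizing x with
  | mem ρ hρ => exact hx.comp_of_mem_gridGenerators hρ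
  | inv_mem ρ hρ => exact hx.comp_of_mem_gridGenerators (inv_mem_gridGenerators hρ)
  | one => exact hx
  | mul ρ σ _ _ hρ hσ => exact hσ (hρ hx)

def intAdj (z w : ℤ × ℤ) : Prop :=
  z.1 ≤ w.1 + 1 ∧ w.1 ≤ z.1 + 1 ∧ z.2 ≤ w.2 + 1 ∧ w.2 ≤ z.2 + 1

lemma intAdj.map_of_mem_gridSymmetries {ρ : Equiv.Perm (ℤ × ℤ)} (hρ : ρ ∈ gridSymmetries)
    {z w : ℤ × ℤ} (h : intAdj z w) : intAdj (ρ z) (ρ w) := by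
  have hgen : ∀ σ ∈ gridGenerators, ∀ {z w}, intAdj z w → intAdj (σ z) (σ w) := by
    rintro σ (rfl | rfl | ⟨c, rfl⟩) z w h <;>
      simp only [intAdj, negFst_apply, Equiv.prodComm_apply, Prod.fst_swap, Prod.snd_swap,
        Equiv.coe_addRight, Prod.fst_add, Prod.snd_add] at h ⊢ <;> omega
  induction hρ using Subgroup.closure_induction'' generalizing z w with
  | mem σ hσ => exact hgen σ hσ h
  | inv_mem σ hσ => exact hgen _ (inv_mem_gridGenerators hσ) h
  | one => exact h
  | mul ρ σ _ _ hρ hσ => exact hρ (hσ h)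

end AdjMinors

section Deformation

variable {A : Type*} [CommRing A]

noncomputable def deformRow (x : ℤ × ℤ → A) (ℓ : ℤ) (z : ℤ × ℤ) : Polynomial A :=
  if z.1 = 0 ∧ 0 ≤ z.2 ∧ z.2 ≤ ℓ then Polynomial.X * Polynomial.C (x (1, z.2))
  else Polynomial.C (x z)

/-- The positions within distance one of the segment `{0} × [0, ℓ]`, except `{1} × [0, ℓ]`. -/
def rowHalo (ℓ : ℤ) : Set (ℤ × ℤ) :=
  {z | -1 ≤ z.1 ∧ z.1 ≤ 1 ∧ -1 ≤ z.2 ∧ z.2 ≤ ℓ + 1 ∧ (z.1 = 1 → z.2 < 0 ∨ ℓ < z.2)}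

@[simp]
lemma mem_rowHalo {ℓ u v : ℤ} :
    (u, v) ∈ rowHalo ℓ ↔ -1 ≤ u ∧ u ≤ 1 ∧ -1 ≤ v ∧ v ≤ ℓ + 1 ∧ (u = 1 → v < 0 ∨ ℓ < v) :=
  Iff.rfl

lemma adjMinorsVanish_deformRow {x : ℤ × ℤ → A} (hx : AdjMinorsVanish x) {ℓ : ℤ}
    (hhalo : ∀ z ∈ rowHalo ℓ, x z = 0) : AdjMinorsVanish (deformRow x ℓ) := by
  have hseg {u v} (h : u = 0 ∧ 0 ≤ v ∧ v ≤ ℓ) :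
      deformRow x ℓ (u, v) = Polynomial.X * Polynomial.C (x (1, v)) :=
    if_pos h
  have hoff {u v} (h : ¬(u = 0 ∧ 0 ≤ v ∧ v ≤ ℓ)) :
      deformRow x ℓ (u, v) = Polynomial.C (x (u, v)) :=
    if_neg h
  have hzero (u v) (hz : (u, v) ∈ rowHalo ℓ) (h : ¬(u = 0 ∧ 0 ≤ v ∧ v ≤ ℓ)) :
      deformRow x ℓ (u, v) = 0 := by
    rw [hoff h, hhalo _ hz, Polynomial.C_0]
  intro a b
  by_cases hmeet : (a = 0 ∨ a = -1) ∧ -1 ≤ b ∧ b ≤ ℓ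
  · obtain ⟨rfl | rfl, hb₁, hb₂⟩ := hmeet
    · rcases (by omega : b = -1 ∨ b = ℓ ∨ (0 ≤ b ∧ b < ℓ)) with rfl | rfl | ⟨hb₀, hbℓ⟩
      · rw [hzero 0 (-1) (by rw [mem_rowHalo]; omega) (by omega),
          hzero (0 + 1) (-1) (by rw [mem_rowHalo]; omega) (by omega), zero_mul, mul_zero]
      · rw [hzero 0 (b + 1) (by rw [mem_rowHalo]; omega) (by omega),
          hzero (0 + 1) (b + 1) (by rw [mem_rowHalo]; omega) (by omega), zero_mul, mul_zero]
      · rw [hseg ⟨rfl, by omega, by omega⟩, hseg ⟨rfl, by omega, by omega⟩, hoff (by omega),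
          hoff (by omega), zero_add]
        ring
    · rw [hzero (-1) b (by rw [mem_rowHalo]; omega) (by omega),
        hzero (-1) (b + 1) (by rw [mem_rowHalo]; omega) (by omega), zero_mul, zero_mul]
  · rw [hoff (by omega), hoff (by omega), hoff (by omega), hoff (by omega), ← Polynomial.C_mul,
      ← Polynomial.C_mul, hx a b]

lemma eval_zero_deformRow {x : ℤ × ℤ → A} {ℓ : ℤ} (hx : ∀ v, 0 ≤ v → v ≤ ℓ → x (0, v) = 0)
    (z : ℤ × ℤ) : (deformRow x ℓ z).eval 0 = x z := by
  unfold deformRow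
  split_ifs with h
  · rw [Polynomial.eval_mul, Polynomial.eval_X, zero_mul, ← hx z.2 h.2.1 h.2.2, ← h.1]
  · rw [Polynomial.eval_C]

end Deformation

section Grid

variable {m n : ℕ}

def gridPt (p : Fin m × Fin n) : ℤ × ℤ := ((p.1 : ℕ), (p.2 : ℕ))

lemma gridPt_injective : Function.Injective (gridPt (m := m) (n := n)) := by
  rintro ⟨⟨a, ha⟩, ⟨b, hb⟩⟩ ⟨⟨c, hc⟩, ⟨d, hd⟩⟩ h
  simp only [gridPt, Prod.mk.injEq, Nat.cast_inj] at h
  simp [h.1, h.2]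

lemma gridPt_eq_iff {p : Fin m × Fin n} {a b : ℤ} :
    gridPt p = (a, b) ↔ ((p.1 : ℕ) : ℤ) = a ∧ ((p.2 : ℕ) : ℤ) = b :=
  Prod.ext_iff

lemma exists_mem_gridPt_eq {S : Set (Fin m × Fin n)} {a b : ℤ} (ha : 0 ≤ a) (ham : a < m)
    (hb : 0 ≤ b) (hbn : b < n) (hS : ∀ p, gridPt p = (a, b) → p ∈ S) :
    ∃ p ∈ S, gridPt p = (a, b) := by
  lift a to ℕ using ha
  lift b to ℕ using hb
  have hp : gridPt ((⟨a, by omega⟩, ⟨b, by omega⟩) : Fin m × Fin n) = ((a : ℤ), (b : ℤ)) := rfl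
  exact ⟨_, hS _ hp, hp⟩

lemma gridAdj_iff_intAdj {p q : Fin m × Fin n} : gridAdj p q ↔ intAdj (gridPt p) (gridPt q) := by
  simp only [gridAdj, intAdj, gridPt]
  omega

variable {K : Type*} [Field K]

noncomputable def gridVal (P : Ideal (MvPolynomial (Fin m × Fin n) K)) :
    ℤ × ℤ → MvPolynomial (Fin m × Fin n) K ⧸ P :=
  Function.extend gridPt (fun p ↦ Ideal.Quotient.mk P (X p)) 0

variable {P : Ideal (MvPolynomial (Fin m × Fin n) K)}

lemma gridVal_gridPt (p : Fin m × Fin n) : gridVal P (gridPt p) = Ideal.Quotient.mk P (X p) :=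
  gridPt_injective.extend_apply _ _ p

lemma gridVal_eq_zero {z : ℤ × ℤ} (hz : ∀ p, gridPt p = z → p ∈ SP P) : gridVal P z = 0 := by
  by_cases h : ∃ p : Fin m × Fin n, gridPt p = z
  · obtain ⟨p, rfl⟩ := h
    rw [gridVal_gridPt, Ideal.Quotient.eq_zero_iff_mem]
    exact hz p rfl
  · exact Function.extend_apply' _ _ _ h

lemma gridVal_of_not_mem_grid (a b : ℤ) (h : a < 0 ∨ m ≤ a ∨ b < 0 ∨ n ≤ b) :
    gridVal P (a, b) = 0 :=
  gridVal_eq_zero fun p hp ↦ by rw [gridPt_eq_iff] at hp; omega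

lemma adjMinorsVanish_gridVal (hIP : adjMinors2Ideal K m n ≤ P) : AdjMinorsVanish (gridVal P) := by
  intro a b
  by_cases hin : 0 ≤ a ∧ a + 1 < m ∧ 0 ≤ b ∧ b + 1 < n
  · obtain ⟨ha, ham, hb, hbn⟩ := hin
    lift a to ℕ using ha
    lift b to ℕ using hb
    have hminor := hIP (Ideal.subset_span ⟨a, b, by omega, by omega, rfl⟩)
    rw [← Ideal.Quotient.eq_zero_iff_mem, map_sub, sub_eq_zero, map_mul, map_mul] at hminor
    simpa only [← gridVal_gridPt, gridPt, Nat.cast_add, Nat.cast_one] using hminor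
  · have hout := gridVal_of_not_mem_grid (P := P)
    rcases (by omega : a < 0 ∨ m ≤ a + 1 ∨ b < 0 ∨ n ≤ b + 1) with h | h | h | h
    · rw [hout a b (by omega), hout a (b + 1) (by omega), zero_mul, zero_mul]
    · rw [hout (a + 1) (b + 1) (by omega), hout (a + 1) b (by omega), mul_zero, mul_zero]
    · rw [hout a b (by omega), hout (a + 1) b (by omega), zero_mul, mul_zero]
    · rw [hout a (b + 1) (by omega), hout (a + 1) (b + 1) (by omega), mul_zero, zero_mul]

theorem eq_zero_of_adjMinorsVanish (hP : P ∈ (adjMinors2Ideal K m n).minimalPrimes)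
    {y : ℤ × ℤ → Polynomial (MvPolynomial (Fin m × Fin n) K ⧸ P)} (hy : AdjMinorsVanish y)
    (hy₀ : ∀ z, (y z).eval 0 = gridVal P z) {p : Fin m × Fin n} (hp : p ∈ SP P) :
    y (gridPt p) = 0 := by
  have := hP.1.1
  set φ := eval₂Hom (Polynomial.C.comp ((Ideal.Quotient.mk P).comp C))
    (y ∘ gridPt (m := m) (n := n))
  have hφX (q : Fin m × Fin n) : φ (X q) = y (gridPt q) := eval₂Hom_X' _ _ _
  have hφ : (Polynomial.evalRingHom 0).comp φ = Ideal.Quotient.mk P := by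
    ext a
    · simp [φ]
    · simp [hφX, hy₀, gridVal_gridPt]
  have hker : P ≤ RingHom.ker φ := by
    refine Ideal.le_ker_of_mem_minimalPrimes (S := Polynomial (_ ⧸ P)) hP φ ?_
      (Polynomial.evalRingHom 0) (by rw [hφ, Ideal.mk_ker])
    rw [adjMinors2Ideal, Ideal.span_le]
    rintro f ⟨i, j, hi, hj, rfl⟩
    rw [SetLike.mem_coe, RingHom.mem_ker, map_sub, map_mul, map_mul, sub_eq_zero]
    simpa only [hφX, gridPt, Nat.cast_add, Nat.cast_one] using hy i j
  simpa [hφX] using RingHom.mem_ker.mp (hker hp)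

end Grid

section Components

variable {m n : ℕ}

lemma gridAdj_comm {p q : Fin m × Fin n} : gridAdj p q ↔ gridAdj q p := by
  unfold gridAdj
  tauto

lemma ConnectedIn.insert_of_gridAdj {A : Set (Fin m × Fin n)} (hA : ConnectedIn A)
    {p q : Fin m × Fin n} (hq : q ∈ A) (hpq : gridAdj p q) : ConnectedIn (insert p A) := by
  have lift {a b} (h : Relation.ReflTransGen (fun x y ↦ gridAdj x y ∧ x ∈ A ∧ y ∈ A) a b) :
      Relation.ReflTransGen (fun x y ↦ gridAdj x y ∧ x ∈ insert p A ∧ y ∈ insert p A) a b :=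
    Relation.ReflTransGen.mono (fun _ _ h ↦ ⟨h.1, Or.inr h.2.1, Or.inr h.2.2⟩) _ _ h
  rintro a (rfl | ha) b (rfl | hb)
  · exact .refl
  · exact .head ⟨hpq, Or.inl rfl, Or.inr hq⟩ (lift (hA q hq b hb))
  · exact .tail (lift (hA a ha q hq)) ⟨gridAdj_comm.mp hpq, Or.inr hq, Or.inl rfl⟩
  · exact lift (hA a ha b hb)

lemma IsComponent.gridBdry_subset_compl {N T : Set (Fin m × Fin n)} (hT : IsComponent N T) :
    gridBdry T ⊆ Nᶜ := by
  rintro p ⟨hpT, q, hqT, hpq⟩ hpN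
  have hins := hT.2.2.2 _ (Set.subset_insert p T) (Set.insert_subset hpN hT.2.1)
    (hT.2.2.1.insert_of_gridAdj hqT hpq)
  exact hpT (hins ▸ Set.mem_insert p T)

lemma exists_isComponent_mem {N : Set (Fin m × Fin n)} {q : Fin m × Fin n} (hq : q ∈ N) :
    ∃ T, IsComponent N T ∧ q ∈ T := by
  let step (A : Set (Fin m × Fin n)) x y := gridAdj x y ∧ x ∈ A ∧ y ∈ A
  have step_symm (A : Set (Fin m × Fin n)) : Std.Symm (step A) :=
    ⟨fun _ _ h ↦ ⟨gridAdj_comm.mp h.1, h.2.2, h.2.1⟩⟩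
  let T := {x | Relation.ReflTransGen (step N) q x}
  have hTN : T ⊆ N := fun x hx ↦ by
    induction hx with
    | refl => exact hq
    | tail _ h => exact h.2.2
  have hpath {x} (hx : x ∈ T) : Relation.ReflTransGen (step T) q x := by
    induction hx with
    | refl => exact .refl
    | @tail y z hqy hyz ih => exact ih.tail ⟨hyz.1, hqy, hqy.tail hyz⟩
  refine ⟨T, ⟨⟨q, .refl⟩, hTN, fun a ha b hb ↦ ?_, fun T' hTT' hT'N hT' ↦ ?_⟩, .refl⟩
  · have := step_symm T
    exact (Std.Symm.symm _ _ (hpath ha)).trans (hpath hb)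
  · refine (Set.Subset.antisymm ?_ hTT')
    exact fun x hx ↦ Relation.ReflTransGen.mono (fun _ _ h ↦ ⟨h.1, hT'N h.2.1, hT'N h.2.2⟩) _ _
      (hT' q (hTT' .refl) x hx)

lemma exists_isComponent_mem_gridBdry {N : Set (Fin m × Fin n)} {e q : Fin m × Fin n}
    (he : e ∉ N) (hq : q ∈ N) (heq : gridAdj e q) :
    ∃ T, IsComponent N T ∧ q ∈ T ∧ e ∈ gridBdry T := by
  obtain ⟨T, hT, hqT⟩ := exists_isComponent_mem hq
  exact ⟨T, hT, hqT, fun heT ↦ he (hT.2.1 heT), q, hqT, heq⟩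

end Components

section Frame

variable {m n : ℕ}

lemma addRight_mem_gridSymmetries (c : ℤ × ℤ) : Equiv.addRight c ∈ gridSymmetries :=
  Subgroup.subset_closure (Or.inr (Or.inr ⟨c, rfl⟩))

lemma negFst_mem_gridSymmetries : negFst ∈ gridSymmetries :=
  Subgroup.subset_closure (Or.inr (Or.inl rfl))

lemma prodComm_mem_gridSymmetries : Equiv.prodComm ℤ ℤ ∈ gridSymmetries :=
  Subgroup.subset_closure (Or.inl rfl)

structure EdgeFrame (T E : Set (Fin m × Fin n)) where
  ρ : Equiv.Perm (ℤ × ℤ)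
  ρ_mem : ρ ∈ gridSymmetries
  len : ℤ
  len_nonneg : 0 ≤ len
  edge : ∀ c, 0 ≤ c → c ≤ len → ∃ e ∈ E, gridPt e = ρ (0, c)
  inner : ∀ c, 0 ≤ c → c ≤ len → ∃ q ∈ T, gridPt q = ρ (1, c)
  outer : ∀ z ∈ rowHalo len, ∀ q ∈ T, gridPt q ≠ ρ z

lemma IsBdryEdge.nonempty_edgeFrame {T E : Set (Fin m × Fin n)} (hE : IsBdryEdge T E)
    (hT : T.Nonempty) : Nonempty (EdgeFrame T E) := by
  obtain ⟨i, s, j, t, rfl, ⟨e, he⟩, hE⟩ := hE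
  obtain ⟨q, hq⟩ := hT
  have := q.1.isLt; have := q.2.isLt; have := e.1.isLt; have := e.2.isLt
  simp only [Set.mem_ofPred_eq] at hq
  -- The bounds `s` and `t` may lie beyond the grid; `len` is cut down to the grid.
  rcases hE with rfl | rfl | rfl | rfl <;> simp only [Set.mem_ofPred_eq] at he <;> [
    refine ⟨⟨Equiv.addRight ((i : ℤ) - 1, (j : ℤ)), addRight_mem_gridSymmetries _,
      min (t : ℤ) (n - 1) - j, by omega, ?_, ?_, ?_⟩⟩;
    refine ⟨⟨Equiv.addRight ((s : ℤ) + 1, (j : ℤ)) * negFst,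
      mul_mem (addRight_mem_gridSymmetries _) negFst_mem_gridSymmetries,
      min (t : ℤ) (n - 1) - j, by omega, ?_, ?_, ?_⟩⟩;
    refine ⟨⟨Equiv.addRight ((i : ℤ), (j : ℤ) - 1) * Equiv.prodComm ℤ ℤ,
      mul_mem (addRight_mem_gridSymmetries _) prodComm_mem_gridSymmetries,
      min (s : ℤ) (m - 1) - i, by omega, ?_, ?_, ?_⟩⟩;
    refine ⟨⟨Equiv.addRight ((i : ℤ), (t : ℤ) + 1) * Equiv.prodComm ℤ ℤ * negFst,
      mul_mem (mul_mem (addRight_mem_gridSymmetries _) prodComm_mem_gridSymmetries)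
        negFst_mem_gridSymmetries,
      min (s : ℤ) (m - 1) - i, by omega, ?_, ?_, ?_⟩⟩]
  all_goals simp only [Equiv.Perm.mul_apply, Equiv.coe_addRight, Prod.mk_add_mk, negFst_apply,
    Equiv.prodComm_apply, Prod.swap_prod_mk]
  all_goals first
    | exact fun c h₀ h₁ ↦ exists_mem_gridPt_eq (by omega) (by omega) (by omega) (by omega)
        fun p hp ↦ by rw [gridPt_eq_iff] at hp; simp only [Set.mem_ofPred_eq]; omega
    | rintro ⟨u, v⟩ ⟨h₁, h₂, h₃, h₄, h₅⟩ p hp hpz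
      have := p.2.isLt
      have := p.1.isLt
      simp only [Set.mem_ofPred_eq] at hp h₁ h₂ h₃ h₄ h₅
      simp only [Prod.mk_add_mk, Prod.swap_prod_mk, gridPt_eq_iff] at hpz
      omega

lemma EdgeFrame.gridAdj {T E : Set (Fin m × Fin n)} (F : EdgeFrame T E) {q e : Fin m × Fin n}
    {u v u' v' : ℤ} (hq : gridPt q = F.ρ (u, v)) (he : gridPt e = F.ρ (u', v'))
    (hu : u ≤ u' + 1 ∧ u' ≤ u + 1) (hv : v ≤ v' + 1 ∧ v' ≤ v + 1) : gridAdj q e := by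
  rw [gridAdj_iff_intAdj, hq, he]
  exact intAdj.map_of_mem_gridSymmetries F.ρ_mem ⟨hu.1, hu.2, hv.1, hv.2⟩

end Frame

section Main

variable {K : Type*} [Field K] {m n : ℕ} {P : Ideal (MvPolynomial (Fin m × Fin n) K)}
  {T E : Set (Fin m × Fin n)}

lemma IsComponent.gridBdry_subset_SP (hT : IsComponent (NP P) T) : gridBdry T ⊆ SP P :=
  fun _ hp ↦ not_not.mp (hT.gridBdry_subset_compl hp)

lemma mem_SP_of_gridAdj_of_not_mem (hcon : ∀ T', IsComponent (NP P) T' → T' ≠ T →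
      gridBdry T' ∩ E = ∅) {e q : Fin m × Fin n} (he : e ∈ E) (heP : e ∈ SP P) (hqT : q ∉ T)
    (hqe : gridAdj q e) : q ∈ SP P := by
  by_contra hq
  obtain ⟨T', hT', hqT', heT'⟩ :=
    exists_isComponent_mem_gridBdry (N := NP P) (not_not.mpr heP) hq (gridAdj_comm.mp hqe)
  exact (hcon T' hT' (fun h ↦ hqT (h ▸ hqT'))).subset ⟨heT', he⟩

lemma EdgeFrame.exists_mem_SP (hT : IsComponent (NP P) T) (F : EdgeFrame T E) {c : ℤ}
    (h₀ : 0 ≤ c) (h₁ : c ≤ F.len) : ∃ e ∈ E, e ∈ SP P ∧ gridPt e = F.ρ (0, c) := by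
  obtain ⟨e, he, hec⟩ := F.edge c h₀ h₁
  obtain ⟨q, hq, hqc⟩ := F.inner c h₀ h₁
  have heT : e ∉ T := fun heT ↦ F.outer (0, c) (by rw [mem_rowHalo]; omega) e heT hec
  exact ⟨e, he, hT.gridBdry_subset_SP ⟨heT, q, hq, F.gridAdj hec hqc (by omega) (by omega)⟩, hec⟩

lemma EdgeFrame.gridVal_eq_zero_of_mem_rowHalo (hT : IsComponent (NP P) T) (F : EdgeFrame T E)
    (hcon : ∀ T', IsComponent (NP P) T' → T' ≠ T → gridBdry T' ∩ E = ∅) {z : ℤ × ℤ}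
    (hz : z ∈ rowHalo F.len) : gridVal P (F.ρ z) = 0 := by
  obtain ⟨u, v⟩ := z
  have hz' := mem_rowHalo.mp hz
  have := F.len_nonneg
  obtain ⟨e, he, heP, hec⟩ := F.exists_mem_SP hT (c := max 0 (min v F.len)) (by omega) (by omega)
  refine gridVal_eq_zero fun q hq ↦ mem_SP_of_gridAdj_of_not_mem hcon he heP
    (fun hqT ↦ F.outer _ hz q hqT hq) (F.gridAdj hq hec (by omega) (by omega))

theorem EdgeFrame.exists_isComponent_meets (hP : P ∈ (adjMinors2Ideal K m n).minimalPrimes)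
    (hT : IsComponent (NP P) T) (F : EdgeFrame T E) :
    ∃ T', IsComponent (NP P) T' ∧ T' ≠ T ∧ (gridBdry T' ∩ E).Nonempty := by
  by_contra! hcon
  have hlen := F.len_nonneg
  set x := gridVal P ∘ F.ρ
  have hhalo (z) (hz : z ∈ rowHalo F.len) : x z = 0 :=
    F.gridVal_eq_zero_of_mem_rowHalo hT hcon hz
  have hy : AdjMinorsVanish (deformRow x F.len ∘ ⇑F.ρ⁻¹) :=
    (adjMinorsVanish_deformRow ((adjMinorsVanish_gridVal hP.1.2).comp_of_mem_gridSymmetries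
      F.ρ_mem) hhalo).comp_of_mem_gridSymmetries (inv_mem F.ρ_mem)
  have hy₀ (z : ℤ × ℤ) : ((deformRow x F.len ∘ ⇑F.ρ⁻¹) z).eval 0 = gridVal P z := by
    rw [Function.comp_apply,
      eval_zero_deformRow fun v h₀ h₁ ↦ hhalo (0, v) (by rw [mem_rowHalo]; omega)]
    simp [x]
  obtain ⟨e, -, heP, hec⟩ := F.exists_mem_SP hT le_rfl hlen
  obtain ⟨q, hq, hqc⟩ := F.inner 0 le_rfl hlen
  have hye := eq_zero_of_adjMinorsVanish hP hy hy₀ heP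
  have := hP.1.1
  rw [hec, Function.comp_apply, Equiv.Perm.inv_def, Equiv.symm_apply_apply, deformRow,
    if_pos ⟨rfl, le_rfl, hlen⟩] at hye
  simp only [x, Function.comp_apply, ← hqc, gridVal_gridPt, mul_eq_zero, Polynomial.X_ne_zero,
    Polynomial.C_eq_zero, Ideal.Quotient.eq_zero_iff_mem, false_or] at hye
  exact hT.2.1 hq hye

end Main

theorem component_boundary_in_SP_and_edges_meet_general
    (K : Type*) [Field K] (m n : ℕ)
    (P : Ideal (MvPolynomial (Fin m × Fin n) K))
    (hP : P ∈ (adjMinors2Ideal K m n).minimalPrimes)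
    (T : Set (Fin m × Fin n)) (hT : IsComponent (NP P) T) :
    gridBdry T ⊆ SP P ∧
    ∀ E, IsBdryEdge T E →
      ∃ T', IsComponent (NP P) T' ∧ T' ≠ T ∧ (gridBdry T' ∩ E).Nonempty :=
  ⟨hT.gridBdry_subset_SP,
    fun _ hE ↦ (hE.nonempty_edgeFrame hT.1).some.exists_isComponent_meets hP hT⟩

/-- the boundary of a connected component `T` of `N_P` lies in `S_P`, and
every boundary edge of `T` meets the boundary of another component of `N_P`. -/
theorem component_boundary_in_SP_and_edges_meet
    (K : Type*) [Field K] (m n : ℕ) (hm : 2 ≤ m) (hn : 2 ≤ n)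
    (P : Ideal (MvPolynomial (Fin m × Fin n) K))
    (hP : P ∈ (adjMinors2Ideal K m n).minimalPrimes)
    (T : Set (Fin m × Fin n)) (hT : IsComponent (NP P) T) :
    gridBdry T ⊆ SP P ∧
    ∀ E, IsBdryEdge T E →
      ∃ T', IsComponent (NP P) T' ∧ T' ≠ T ∧ (gridBdry T' ∩ E).Nonempty :=
  component_boundary_in_SP_and_edges_meet_general K m n P hP T hT
end

section
/- The ideal I_mn(m) of adjacent maximal minors is a radical ideal of R. -/
open MvPolynomial

/-- The adjacent maximal minor of the generic `m × n` matrix starting at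
(0-based) column `c`: the determinant of the `m × m` submatrix on columns
`c, c+1, …, c+m-1`. -/
noncomputable def adjMaxMinor (K : Type*) [Field K] (m n : ℕ) (c : ℕ) (hc : c + m ≤ n) :
    MvPolynomial (Fin m × Fin n) K :=
  (Matrix.of fun i j : Fin m =>
    X (i, (⟨c + j.1, by have := j.2; omega⟩ : Fin n))).det

/-- The ideal `I_mn(m)` generated by the `n - m + 1` adjacent maximal minors. -/
noncomputable def adjMaxIdeal (K : Type*) [Field K] (m n : ℕ) :
    Ideal (MvPolynomial (Fin m × Fin n) K) :=
  Ideal.span {f | ∃ (c : ℕ) (hc : c + m ≤ n), f = adjMaxMinor K m n c hc}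

/-!
Order the variables row by row, `x₀₀ > x₀₁ > ⋯ > x₁₀ > ⋯`, and use the lexicographic monomial
order. The leading monomial of the adjacent minor at column `c` is then its diagonal
`x₀,c x₁,c+1 ⋯ xₘ₋₁,c+m-1`. These diagonals are squarefree and pairwise coprime, so (Buchberger's
first criterion) every nonzero element of the ideal has a leading monomial divisible by one of
them. An ideal with such a squarefree "Gröbner basis" is radical: if `yⁿ ∈ I`, the squarefree
leading monomial dividing `n • lead y` already divides `lead y`, and reducing `y` by the
corresponding generator lowers its leading monomial without leaving `√I`.
-/

open scoped MonomialOrder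

namespace Finsupp

variable {σ : Type*}

theorem le_of_le_add_of_disjoint {a b c : σ →₀ ℕ} (hac : Disjoint a c) (h : a ≤ b + c) :
    a ≤ b := fun s => by
  have hs : a s ≤ b s + c s := h s
  have hdisj (ha : a s ≠ 0) : c s = 0 := by
    simpa using Finset.disjoint_left.mp (disjoint_iff.mp hac) (mem_support_iff.mpr ha)
  by_cases ha : a s = 0
  · simp [ha]
  · simpa [hdisj ha] using hs

theorem le_of_le_nsmul_of_forall_le_one {a b : σ →₀ ℕ} {n : ℕ} (ha : ∀ s, a s ≤ 1)
    (h : a ≤ n • b) : a ≤ b := fun s => by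
  have hs : a s ≤ n * b s := h s
  rcases Nat.eq_zero_or_pos (b s) with hb | hb
  · simpa [hb] using hs
  · exact (ha s).trans hb

end Finsupp

namespace MonomialOrder

variable {σ : Type*} {ord : MonomialOrder σ} {K : Type*} [Field K]

theorem degree_reduce_mul_lt {a b c : MvPolynomial σ K} (hb : b ≠ 0) (hb0 : ord.degree b ≠ 0)
    (hc : c ≠ 0) (hbc : Disjoint (ord.degree b) (ord.degree c))
    (hdvd : ord.degree b ≤ ord.degree (a * c)) :
    ord.degree (ord.reduce (isUnit_leadingCoeff.mpr hb) a * c) ≺[ord] ord.degree (a * c) := by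
  have ha : a ≠ 0 := by
    rintro rfl
    exact hb0 (nonpos_iff_eq_zero.mp (by simpa using hdvd))
  rw [degree_mul ha hc] at hdvd ⊢
  have hba : ord.degree b ≤ ord.degree a := Finsupp.le_of_le_add_of_disjoint hbc hdvd
  calc ord.toSyn (ord.degree (ord.reduce _ a * c))
      ≤ ord.toSyn (ord.degree (ord.reduce _ a)) + ord.toSyn (ord.degree c) := by
        rw [← map_add]; exact degree_mul_le
    _ < ord.toSyn (ord.degree a) + ord.toSyn (ord.degree c) := by
        gcongr
        exact degree_reduce_lt _ hba fun h => hb0 (nonpos_iff_eq_zero.mp (h ▸ hba))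
    _ = ord.toSyn (ord.degree a + ord.degree c) := (map_add _ _ _).symm

variable {ι : Type*} {g : ι → MvPolynomial σ K}

theorem degree_lt_of_degree_sum_lt {R : Type*} [CommRing R] [Fintype ι] [DecidableEq ι]
    {a : ι → MvPolynomial σ R}
    {t : ord.syn} (hsum : ord.toSyn (ord.degree (∑ i, a i)) < t) (l : ι)
    (hne : ∀ i ≠ l, ord.toSyn (ord.degree (a i)) < t) :
    ord.toSyn (ord.degree (a l)) < t := by
  rw [← add_sub_cancel_right (a l) (∑ i ∈ Finset.univ.erase l, a i),
    Finset.add_sum_erase _ _ (Finset.mem_univ l)]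
  refine degree_sub_le.trans_lt (max_lt hsum (degree_sum_le.trans_lt ?_))
  exact (Finset.sup_lt_iff (bot_le.trans_lt hsum)).mpr fun i hi => hne i (Finset.ne_of_mem_erase hi)

theorem exists_sum_mul_eq_forall_degree_lt [Fintype ι] [DecidableEq ι] (hg : ∀ i, g i ≠ 0)
    (hg0 : ∀ i, ord.degree (g i) ≠ 0)
    (hdisj : Pairwise fun i j => Disjoint (ord.degree (g i)) (ord.degree (g j)))
    {h : ι → MvPolynomial σ K} {t : ord.syn} (hle : ∀ i, ord.toSyn (ord.degree (h i * g i)) ≤ t)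
    (hlt : ord.toSyn (ord.degree (∑ i, h i * g i)) < t) :
    ∃ h' : ι → MvPolynomial σ K, ∑ i, h' i * g i = ∑ i, h i * g i ∧
      ∀ i, ord.toSyn (ord.degree (h' i * g i)) < t := by
  by_cases! htop : ∀ i, ord.toSyn (ord.degree (h i * g i)) ≠ t
  · exact ⟨h, rfl, fun i => (hle i).lt_of_ne (htop i)⟩
  obtain ⟨l, hl⟩ := htop
  have hne_zero {i} (hi : ord.toSyn (ord.degree (h i * g i)) = t) : h i * g i ≠ 0 := by
    rintro h0
    rw [h0, degree_zero, map_zero] at hi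
    exact (ord.zero_le _).not_gt (hi ▸ hlt)
  have hb : IsUnit (ord.leadingCoeff (g l)) := isUnit_leadingCoeff.mpr (hg l)
  -- By coprimality `lead (g l)` divides `lead (h j)` for every other top summand, so `h j` is
  -- reduced by `g l`; the compensating `q j * g j` is added to `h l`, whose summand then drops
  -- below `t` together with all the others.
  let q : ι → MvPolynomial σ K := fun j =>
    if j ≠ l ∧ ord.toSyn (ord.degree (h j * g j)) = t then
      monomial (ord.degree (h j) - ord.degree (g l)) (hb.unit⁻¹ * ord.leadingCoeff (h j))
    else 0
  let h' : ι → MvPolynomial σ K := fun i =>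
    h i - q i * g l + if i = l then ∑ j, q j * g j else 0
  have hsum : ∑ i, h' i * g i = ∑ i, h i * g i := by
    simp only [h', add_mul, sub_mul, ite_mul, zero_mul, Finset.sum_add_distrib,
      Finset.sum_sub_distrib, Finset.sum_ite_eq', Finset.mem_univ, if_true, Finset.sum_mul]
    rw [Finset.sum_congr rfl fun i _ => mul_right_comm (q i) (g l) (g i)]
    abel
  have hlt_ne : ∀ i ≠ l, ord.toSyn (ord.degree (h' i * g i)) < t := by
    intro i hil
    by_cases hi : ord.toSyn (ord.degree (h i * g i)) = t
    · have hreduce : h' i = ord.reduce hb (h i) := by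
        simp [h', q, hil, hi, reduce]
      rw [hreduce, ← hi]
      refine degree_reduce_mul_lt (hg l) (hg0 l) (hg i) (hdisj (Ne.symm hil)) ?_
      have hl' := hne_zero hl
      rw [mul_ne_zero_iff] at hl'
      rw [← ord.toSyn.injective (hl.trans hi.symm), degree_mul hl'.1 hl'.2]
      exact le_add_self
    · simpa [h', q, hil, hi] using (hle i).lt_of_ne hi
  refine ⟨h', hsum, fun i => ?_⟩
  rcases eq_or_ne i l with rfl | hil
  · exact degree_lt_of_degree_sum_lt (a := fun i => h' i * g i) (by rwa [hsum]) i hlt_ne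
  · exact hlt_ne i hil

theorem exists_degree_le_of_mem_span_of_pairwise_disjoint [Fintype ι] (hg : ∀ i, g i ≠ 0)
    (hdisj : Pairwise fun i j => Disjoint (ord.degree (g i)) (ord.degree (g j)))
    {f : MvPolynomial σ K} (hf : f ∈ Ideal.span (Set.range g)) (hf0 : f ≠ 0) :
    ∃ i, ord.degree (g i) ≤ ord.degree f := by
  classical
  by_cases! hg0 : ∃ i, ord.degree (g i) = 0
  · obtain ⟨i, hi⟩ := hg0
    exact ⟨i, hi ▸ _root_.zero_le⟩
  suffices key : ∀ t : ord.syn, ∀ h : ι → MvPolynomial σ K, ∑ i, h i * g i = f →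
      (∀ i, ord.toSyn (ord.degree (h i * g i)) ≤ t) → ∃ i, ord.degree (g i) ≤ ord.degree f by
    obtain ⟨h, hh⟩ := Ideal.mem_span_range_iff_exists_fun.mp hf
    exact key _ h hh fun i => Finset.le_sup (f := fun i => ord.toSyn (ord.degree (h i * g i)))
      (Finset.mem_univ i)
  intro t
  induction t using WellFoundedLT.induction with
  | _ t IH =>
  intro h hsum hle
  have hf_le : ord.toSyn (ord.degree f) ≤ t :=
    hsum ▸ degree_sum_le.trans (Finset.sup_le fun i _ => hle i)
  rcases hf_le.lt_or_eq with hlt | heq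
  · rw [← hsum] at hlt
    obtain ⟨h', hsum', hlt'⟩ := exists_sum_mul_eq_forall_degree_lt hg hg0 hdisj hle hlt
    exact IH _ ((Finset.sup_lt_iff (bot_le.trans_lt hlt)).mpr fun i _ => hlt' i) h'
      (hsum'.trans hsum) fun i => Finset.le_sup (f := fun i => ord.toSyn (ord.degree (h' i * g i)))
        (Finset.mem_univ i)
  · -- the leading monomial of `f` survives in some summand `h i * g i`
    have hcoeff : coeff (ord.degree f) (∑ i, h i * g i) ≠ 0 := by
      rw [hsum]; exact coeff_degree_ne_zero_iff.mpr hf0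
    rw [coeff_sum] at hcoeff
    obtain ⟨i, -, hi⟩ := Finset.exists_ne_zero_of_sum_ne_zero hcoeff
    have hdeg : ord.degree (h i * g i) = ord.degree f := ord.toSyn.injective <|
      le_antisymm (heq ▸ hle i) (le_degree (mem_support_iff.mpr hi))
    have hhi : h i ≠ 0 := fun h0 => by simp [h0] at hi
    exact ⟨i, hdeg ▸ degree_mul hhi (hg i) ▸ le_add_self⟩

theorem isRadical_of_exists_degree_le {I : Ideal (MvPolynomial σ K)}
    (hg : ∀ i, g i ≠ 0) (hgI : ∀ i, g i ∈ I) (hsqfree : ∀ i s, ord.degree (g i) s ≤ 1)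
    (hlead : ∀ f ∈ I, f ≠ 0 → ∃ i, ord.degree (g i) ≤ ord.degree f) :
    I.IsRadical := by
  suffices key : ∀ t : ord.syn, ∀ y ∈ I.radical, ord.toSyn (ord.degree y) = t → y ∈ I from
    fun y hy => key _ y hy rfl
  intro t
  induction t using WellFoundedLT.induction with
  | _ t IH =>
  rintro y ⟨n, hn⟩ rfl
  by_cases hy : y = 0
  · simp [hy]
  obtain ⟨i, hi⟩ := hlead _ hn (pow_ne_zero n hy)
  rw [degree_pow] at hi
  have hdvd := Finsupp.le_of_le_nsmul_of_forall_le_one (hsqfree i) hi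
  by_cases hy0 : ord.degree y = 0
  · -- `y` is a nonzero constant, so `I` contains a unit
    have hunit : IsUnit (y ^ n) := by
      rw [eq_C_of_degree_eq_zero hy0]
      exact ((isUnit_leadingCoeff.mpr hy).map C).pow n
    simp [I.eq_top_of_isUnit_mem hn hunit]
  have hb : IsUnit (ord.leadingCoeff (g i)) := isUnit_leadingCoeff.mpr (hg i)
  have hmul : y - ord.reduce hb y ∈ I := by
    rw [reduce, sub_sub_cancel]
    exact I.mul_mem_left _ (hgI i)
  have hred : ord.reduce hb y ∈ I.radical :=
    (sub_sub_cancel y (ord.reduce hb y)) ▸ I.radical.sub_mem ⟨n, hn⟩ (I.le_radical hmul)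
  have := IH _ (degree_reduce_lt hb hdvd hy0) _ hred rfl
  simpa using I.add_mem this hmul

end MonomialOrder

noncomputable def MonomialOrder.domCongr {σ τ : Type*} (e : σ ≃ τ) (ord : MonomialOrder τ) :
    MonomialOrder σ where
  syn := ord.syn
  toSyn := (Finsupp.domCongr e).trans ord.toSyn
  toSyn_monotone _ _ h := ord.toSyn_monotone fun x => h (e.symm x)

theorem Equiv.Perm.exists_forall_lt_apply_eq_and_lt_apply {α : Type*} [LinearOrder α]
    [WellFoundedLT α] {τ : Equiv.Perm α} (hτ : τ ≠ 1) :
    ∃ i, (∀ j < i, τ j = j) ∧ i < τ i := by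
  obtain ⟨i, hi, hmin⟩ := wellFounded_lt.has_min {i | τ i ≠ i}
    (not_forall.mp fun h => hτ (Equiv.ext h))
  have hfix : ∀ j < i, τ j = j := fun j hj => by_contra fun h => hmin j h hj
  exact ⟨i, hfix, (lt_or_gt_of_ne hi).resolve_left fun hlt => hi (τ.injective (hfix _ hlt))⟩

section GenericMatrix

variable {m n : ℕ}

noncomputable def rowMajorLex (m n : ℕ) : MonomialOrder (Fin m × Fin n) :=
  MonomialOrder.lex.domCongr toLex

noncomputable def graphExponent (f : Fin m → Fin n) : Fin m × Fin n →₀ ℕ :=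
  ∑ i, Finsupp.single (i, f i) 1

theorem graphExponent_apply (f : Fin m → Fin n) (i : Fin m) (j : Fin n) :
    graphExponent f (i, j) = if f i = j then 1 else 0 := by
  simp only [graphExponent, Finsupp.finsetSum_apply, Finsupp.single_apply, Prod.ext_iff]
  simp [ite_and, eq_comm]

theorem graphExponent_lt {f g : Fin m → Fin n} {i : Fin m} (heq : ∀ j < i, f j = g j)
    (hlt : g i < f i) : graphExponent f ≺[rowMajorLex m n] graphExponent g := by
  show toLex (Finsupp.domCongr toLex (graphExponent f)) <
    toLex (Finsupp.domCongr toLex (graphExponent g))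
  rw [Finsupp.Lex.lt_iff]
  refine ⟨toLex (i, g i), fun x hx => ?_, ?_⟩
  · obtain ⟨⟨r, s⟩, rfl⟩ := toLex.surjective x
    simp only [ofLex_toLex, Finsupp.domCongr_apply, Finsupp.equivMapDomain_apply,
      Equiv.symm_apply_apply, graphExponent_apply]
    rcases Prod.Lex.lt_iff.mp hx with hr | ⟨hr, hs⟩
    · rw [heq r hr]
    · obtain rfl : r = i := hr
      replace hs : s < g r := hs
      rw [if_neg (hs.trans hlt).ne', if_neg hs.ne']
  · simp [Finsupp.equivMapDomain_apply, graphExponent_apply, hlt.ne']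

theorem graphExponent_comp_lt {col : Fin m → Fin n} (hcol : StrictMono col)
    {τ : Equiv.Perm (Fin m)} (hτ : τ ≠ 1) :
    graphExponent (col ∘ τ) ≺[rowMajorLex m n] graphExponent col := by
  obtain ⟨i, hfix, hi⟩ := τ.exists_forall_lt_apply_eq_and_lt_apply hτ
  exact graphExponent_lt (fun j hj => congrArg col (hfix j hj)) (hcol hi)

variable {R : Type*} [CommRing R]

theorem det_X_eq_sum_monomial (col : Fin m → Fin n) :
    (Matrix.of fun i j : Fin m => (X (i, col j) : MvPolynomial (Fin m × Fin n) R)).det =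
      ∑ τ : Equiv.Perm (Fin m),
        monomial (graphExponent (col ∘ τ)) ((Equiv.Perm.sign τ : ℤ) : R) := by
  rw [← Matrix.det_transpose, Matrix.det_apply]
  refine Finset.sum_congr rfl fun τ _ => ?_
  rw [graphExponent, ← mul_one ((Equiv.Perm.sign τ : ℤ) : R), ← C_mul_monomial, monomial_sum_one]
  simp [X, Units.smul_def, zsmul_eq_mul]

theorem coeff_graphExponent_det_X {col : Fin m → Fin n} (hcol : StrictMono col) :
    coeff (graphExponent col)
      (Matrix.of fun i j : Fin m => (X (i, col j) : MvPolynomial (Fin m × Fin n) R)).det = 1 := by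
  classical
  rw [det_X_eq_sum_monomial, coeff_sum, Finset.sum_eq_single_of_mem 1 (Finset.mem_univ _)]
  · simp
  · intro τ _ hτ
    rw [coeff_monomial, if_neg fun h => (graphExponent_comp_lt hcol hτ).ne (congrArg _ h)]

theorem degree_det_X [Nontrivial R] {col : Fin m → Fin n} (hcol : StrictMono col) :
    (rowMajorLex m n).degree
      (Matrix.of fun i j : Fin m => (X (i, col j) : MvPolynomial (Fin m × Fin n) R)).det =
      graphExponent col := by
  refine (rowMajorLex m n).toSyn.injective (le_antisymm ?_ ?_)
  · rw [det_X_eq_sum_monomial]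
    refine MonomialOrder.degree_sum_le.trans (Finset.sup_le fun τ _ => ?_)
    refine MonomialOrder.degree_monomial_le _ |>.trans ?_
    rcases eq_or_ne τ 1 with rfl | hτ
    · rfl
    · exact (graphExponent_comp_lt hcol hτ).le
  · exact MonomialOrder.le_degree (by simp [coeff_graphExponent_det_X hcol])

theorem graphExponent_apply_le_one (f : Fin m → Fin n) (x : Fin m × Fin n) :
    graphExponent f x ≤ 1 := by
  rw [graphExponent_apply]
  split <;> omega

theorem disjoint_graphExponent {f g : Fin m → Fin n} (h : ∀ i, f i ≠ g i) :
    Disjoint (graphExponent f) (graphExponent g) := by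
  rw [Finsupp.disjoint_iff, Finset.disjoint_left]
  rintro ⟨i, j⟩ hf hg
  simp only [Finsupp.mem_support_iff, graphExponent_apply, ne_eq, ite_eq_right_iff,
    one_ne_zero, imp_false, not_not] at hf hg
  exact h i (hf.trans hg.symm)

variable {K : Type*} [Field K]

def adjCols (c : ℕ) (hc : c + m ≤ n) : Fin m → Fin n := fun j => ⟨c + j, by omega⟩

theorem adjCols_strictMono (c : ℕ) (hc : c + m ≤ n) : StrictMono (adjCols c hc) :=
  fun _ _ h => Fin.mk_lt_mk.mpr (Nat.add_lt_add_left h c)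

theorem adjMaxMinor_eq_det (c : ℕ) (hc : c + m ≤ n) :
    adjMaxMinor K m n c hc = (Matrix.of fun i j => X (i, adjCols c hc j)).det := rfl

theorem degree_adjMaxMinor (c : ℕ) (hc : c + m ≤ n) :
    (rowMajorLex m n).degree (adjMaxMinor K m n c hc) = graphExponent (adjCols c hc) := by
  rw [adjMaxMinor_eq_det, degree_det_X (adjCols_strictMono c hc)]

theorem adjMaxMinor_ne_zero (c : ℕ) (hc : c + m ≤ n) : adjMaxMinor K m n c hc ≠ 0 := by
  rw [adjMaxMinor_eq_det, ne_zero_iff]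
  refine ⟨graphExponent (adjCols c hc), ?_⟩
  rw [coeff_graphExponent_det_X (adjCols_strictMono c hc)]
  exact one_ne_zero

theorem disjoint_degree_adjMaxMinor {c c' : ℕ} (hc : c + m ≤ n) (hc' : c' + m ≤ n)
    (hcc' : c ≠ c') :
    Disjoint ((rowMajorLex m n).degree (adjMaxMinor K m n c hc))
      ((rowMajorLex m n).degree (adjMaxMinor K m n c' hc')) := by
  rw [degree_adjMaxMinor, degree_adjMaxMinor]
  exact disjoint_graphExponent fun j h => hcc' (by simpa [adjCols] using h)

theorem adjMaxIdeal_eq_span_range :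
    adjMaxIdeal K m n =
      Ideal.span (Set.range fun c : Fin (n + 1 - m) => adjMaxMinor K m n c (by omega)) := by
  refine congrArg Ideal.span (Set.ext fun f => ⟨?_, ?_⟩)
  · rintro ⟨c, hc, rfl⟩
    exact ⟨⟨c, by omega⟩, rfl⟩
  · rintro ⟨c, rfl⟩
    exact ⟨c, _, rfl⟩

end GenericMatrix

theorem adjMaxIdeal_isRadical_general
    (K : Type*) [Field K] (m n : ℕ) :
    (adjMaxIdeal K m n).IsRadical := by
  set g : Fin (n + 1 - m) → MvPolynomial (Fin m × Fin n) K :=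
    fun c => adjMaxMinor K m n c (by omega)
  have hg : ∀ c, g c ≠ 0 := fun c => adjMaxMinor_ne_zero _ _
  have hcoprime : Pairwise fun c c' =>
      Disjoint ((rowMajorLex m n).degree (g c)) ((rowMajorLex m n).degree (g c')) :=
    fun c c' hcc' => disjoint_degree_adjMaxMinor _ _ (Fin.val_injective.ne hcc')
  have hsqfree : ∀ c s, (rowMajorLex m n).degree (g c) s ≤ 1 :=
    fun c s => degree_adjMaxMinor (K := K) c _ ▸ graphExponent_apply_le_one _ s
  rw [adjMaxIdeal_eq_span_range]
  exact (rowMajorLex m n).isRadical_of_exists_degree_le hg (fun c => Ideal.subset_span ⟨c, rfl⟩)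
    hsqfree fun f hf hf0 =>
      MonomialOrder.exists_degree_le_of_mem_span_of_pairwise_disjoint hg hcoprime hf hf0

/-- the ideal of adjacent maximal minors is radical. -/
theorem adjMaxIdeal_isRadical
    (K : Type*) [Field K] (m n : ℕ) (hm : 2 ≤ m) (hmn : m ≤ n) :
    (adjMaxIdeal K m n).IsRadical :=
  adjMaxIdeal_isRadical_general K m n
end

section
/- Fix m ≥ 2 and for each n ≥ 1 let f_m(n) denote the number of prime sequences for the parameters m, n. Then f_m(n) = 0 for 1 ≤ n ≤ m−2, f_m(m−1) = f_m(m) = 1, and for all n ≥ m the recurrence f_m(n+1) = Σ_{i=0}^{m−1} f_m(n−i) holds. -/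
/-- A prime sequence for the parameters `m`, `n`: a list of integer intervals
`[a_1,b_1], …, [a_k,b_k]` (recorded as pairs) covering `[0, n+1]`, each of width at
least `m` (i.e. containing more than `m` integers), with strictly increasing left and
right endpoints, consecutive intervals overlapping in at least `1` and at most `m - 1`
columns. -/
def IsPrimeSeq (m n : ℕ) (Γ : List (ℕ × ℕ)) : Prop :=
  ∃ h0 : 0 < Γ.length,
    (Γ[0]'h0).1 = 0 ∧
    (Γ[Γ.length - 1]'(by omega)).2 = n + 1 ∧
    (∀ i (hi : i < Γ.length), (Γ[i]'hi).1 + m ≤ (Γ[i]'hi).2) ∧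
    ∀ i (hi : i + 1 < Γ.length),
      (Γ[i]'(by omega)).1 < (Γ[i + 1]'hi).1 ∧
      (Γ[i]'(by omega)).2 < (Γ[i + 1]'hi).2 ∧
      (Γ[i + 1]'hi).1 ≤ (Γ[i]'(by omega)).2 ∧
      (Γ[i]'(by omega)).2 + 2 ≤ (Γ[i + 1]'hi).1 + m

/-!
Let `n ≥ m` and let `[a, n + 2]` be the last interval of a prime sequence for `n + 1`.
If `a + m ≤ n + 1`, shrinking it to `[a, n + 1]` gives a prime sequence for `n`.
Otherwise `a = n + 2 - m`, and the overlap condition forces the right end `b` of the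
previous interval into `[n + 2 - m, n]`; deleting the last interval leaves a prime sequence
for `n - i`, where `b = n - i + 1` and `1 ≤ i < m`. Both operations are reversible, which
gives the recurrence. For `n ≤ m` there is no room for two intervals, so the only
candidate is `[[0, n + 1]]`.

Counting with `encard`, which is additive without finiteness hypotheses, the recurrence
also shows by strong induction that every set of prime sequences is finite.
-/

theorem List.eq_nil_or_singleton_or_append_pair {α : Type*} (l : List α) :
    l = [] ∨ (∃ p, l = [p]) ∨ ∃ Δ p q, l = Δ ++ [p, q] := by
  rcases l.eq_nil_or_concat' with rfl | ⟨L, q, rfl⟩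
  · exact .inl rfl
  rcases L.eq_nil_or_concat' with rfl | ⟨Δ, p, rfl⟩
  · exact .inr (.inl ⟨q, rfl⟩)
  · exact .inr (.inr ⟨Δ, p, q, by simp⟩)

theorem List.modifyLast_injective {α : Type*} {f : α → α} (hf : Function.Injective f) :
    Function.Injective (List.modifyLast f) := by
  intro l₁ l₂ h
  rcases l₁.eq_nil_or_concat' with rfl | ⟨Δ₁, x₁, rfl⟩ <;>
    rcases l₂.eq_nil_or_concat' with rfl | ⟨Δ₂, x₂, rfl⟩
  · rfl
  all_goals simp only [List.modifyLast_concat, show List.modifyLast f [] = [] from rfl] at h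
  · simp at h
  · simp at h
  · obtain ⟨rfl, hx⟩ := List.append_inj' h rfl
    rw [hf (List.singleton_injective hx)]

def PrimeSeqStep (m : ℕ) (p q : ℕ × ℕ) : Prop :=
  p.1 < q.1 ∧ p.2 < q.2 ∧ q.1 ≤ p.2 ∧ p.2 + 2 ≤ q.1 + m

def primeSeqs (m n : ℕ) : Set (List (ℕ × ℕ)) := {Γ | IsPrimeSeq m n Γ}

@[simp]
theorem mem_primeSeqs {m n : ℕ} {Γ : List (ℕ × ℕ)} : Γ ∈ primeSeqs m n ↔ IsPrimeSeq m n Γ :=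
  Iff.rfl

def widenLast : List (ℕ × ℕ) → List (ℕ × ℕ) := List.modifyLast fun p => (p.1, p.2 + 1)

theorem widenLast_injective : Function.Injective widenLast :=
  List.modifyLast_injective fun p q h => by simpa [Prod.ext_iff] using h

section PrimeSeq

variable {m n : ℕ} {Γ Δ : List (ℕ × ℕ)} {p q : ℕ × ℕ}

theorem isPrimeSeq_iff_isChain : IsPrimeSeq m n Γ ↔ Γ ≠ [] ∧ (∀ p ∈ Γ.head?, p.1 = 0) ∧
    (∀ p ∈ Γ.getLast?, p.2 = n + 1) ∧ (∀ p ∈ Γ, p.1 + m ≤ p.2) ∧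
    Γ.IsChain (PrimeSeqStep m) := by
  simp only [IsPrimeSeq, PrimeSeqStep, List.isChain_iff_getElem, List.forall_mem_iff_getElem,
    List.head?_eq_getElem?, List.getLast?_eq_getElem?, ← List.length_pos_iff]
  constructor
  · rintro ⟨h0, h1, h2, h3, h4⟩
    refine ⟨h0, ?_, ?_, h3, h4⟩ <;> simp [*]
  · rintro ⟨h0, h1, h2, h3, h4⟩
    refine ⟨h0, by simpa [List.getElem?_eq_getElem h0] using h1, ?_, h3, h4⟩
    simpa [List.getElem?_eq_getElem (show Γ.length - 1 < Γ.length by omega)] using h2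

theorem isPrimeSeq_singleton_iff : IsPrimeSeq m n [p] ↔ p = (0, n + 1) ∧ m ≤ n + 1 := by
  obtain ⟨a, b⟩ := p
  simp only [isPrimeSeq_iff_isChain, ne_eq, List.cons_ne_self, not_false_eq_true,
    List.head?_cons, Option.mem_def, Option.some.injEq, forall_eq', List.getLast?_singleton,
    List.mem_cons, List.not_mem_nil, or_false, forall_eq, List.IsChain.singleton, and_true,
    true_and, Prod.mk.injEq]
  omega

theorem isPrimeSeq_append_pair_iff : IsPrimeSeq m n (Δ ++ [p, q]) ↔
    IsPrimeSeq m (p.2 - 1) (Δ ++ [p]) ∧ PrimeSeqStep m p q ∧ q.1 + m ≤ q.2 ∧ q.2 = n + 1 := by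
  rw [show Δ ++ [p, q] = Δ ++ [p] ++ [q] by simp, isPrimeSeq_iff_isChain, isPrimeSeq_iff_isChain,
    List.isChain_append, List.head?_append_of_ne_nil _ (by simp)]
  simp only [ne_eq, List.append_eq_nil_iff, List.cons_ne_nil, and_false, not_false_eq_true,
    Option.mem_def, List.getLast?_concat, Option.some.injEq, forall_eq', List.mem_append,
    List.mem_singleton, or_imp, forall_and, forall_eq, List.isChain_singleton, List.head?_cons,
    true_and]
  have hp : PrimeSeqStep m p q → p.2 - 1 + 1 = p.2 := fun ⟨h1, _, h3, _⟩ => by omega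
  constructor
  · rintro ⟨h0, hq, ⟨hw, hq'⟩, hc, hs⟩
    exact ⟨⟨h0, (hp hs).symm, hw, hc⟩, hs, hq', hq⟩
  · rintro ⟨⟨h0, -, hw, hc⟩, hs, hq', hq⟩
    exact ⟨h0, hq, ⟨hw, hq'⟩, hc, hs⟩

namespace IsPrimeSeq

theorem ne_nil (h : IsPrimeSeq m n Γ) : Γ ≠ [] :=
  (isPrimeSeq_iff_isChain.mp h).1

theorem last_spec (h : IsPrimeSeq m n (Δ ++ [p])) : p.1 + m ≤ p.2 ∧ p.2 = n + 1 := by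
  obtain ⟨-, -, hlast, hwidth, -⟩ := isPrimeSeq_iff_isChain.mp h
  exact ⟨hwidth p (by simp), hlast p (by simp)⟩

theorem eq_append_singleton (h : IsPrimeSeq m n Γ) :
    ∃ Δ a, Γ = Δ ++ [(a, n + 1)] ∧ a + m ≤ n + 1 := by
  obtain ⟨Δ, ⟨a, b⟩, rfl⟩ := (Γ.eq_nil_or_concat').resolve_left h.ne_nil
  obtain ⟨hw, rfl⟩ := h.last_spec
  exact ⟨Δ, a, rfl, hw⟩

theorem unique {n' : ℕ} (h : IsPrimeSeq m n Γ) (h' : IsPrimeSeq m n' Γ) : n = n' := by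
  obtain ⟨Δ, a, rfl, -⟩ := h.eq_append_singleton
  have := h'.last_spec.2
  omega

/-- The overlap condition already puts the previous right end below `a + m`, so only the
width of the last interval constrains its new right end. -/
theorem resizeLast {n' a b : ℕ} (h : IsPrimeSeq m n (Δ ++ [(a, b)])) (hw : a + m ≤ n' + 1) :
    IsPrimeSeq m n' (Δ ++ [(a, n' + 1)]) := by
  rcases Δ.eq_nil_or_concat' with rfl | ⟨Δ, p, rfl⟩
  · rw [List.nil_append, isPrimeSeq_singleton_iff] at h ⊢
    simp_all
  · rw [List.append_assoc, List.singleton_append, isPrimeSeq_append_pair_iff] at h ⊢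
    obtain ⟨hΔ, ⟨h1, -, h3, h4⟩, -⟩ := h
    exact ⟨hΔ, ⟨h1, by dsimp only; omega, h3, h4⟩, hw, rfl⟩

end IsPrimeSeq

end PrimeSeq

open IsPrimeSeq

theorem primeSeqs_eq_empty {m n : ℕ} (h : n + 2 ≤ m) : primeSeqs m n = ∅ := by
  refine Set.eq_empty_of_forall_notMem fun Γ hΓ => ?_
  obtain ⟨Δ, a, -, hw⟩ := eq_append_singleton hΓ
  omega

theorem primeSeqs_eq_singleton {m n : ℕ} (h₁ : m ≤ n + 1) (h₂ : n ≤ m) :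
    primeSeqs m n = {[(0, n + 1)]} := by
  ext Γ
  refine ⟨fun hΓ => ?_, fun hΓ => (hΓ ▸ isPrimeSeq_singleton_iff.mpr ⟨rfl, h₁⟩ : IsPrimeSeq m n Γ)⟩
  rcases Γ.eq_nil_or_singleton_or_append_pair with rfl | ⟨p, rfl⟩ | ⟨Δ, p, q, rfl⟩
  · exact absurd rfl (ne_nil hΓ)
  · rw [(isPrimeSeq_singleton_iff.mp hΓ).1, Set.mem_singleton_iff]
  · obtain ⟨hΔ, ⟨-, -, -, hstep⟩, hq, hq'⟩ := isPrimeSeq_append_pair_iff.mp hΓ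
    have := hΔ.last_spec.1
    omega

section Recurrence

variable {m n : ℕ}

theorem primeSeqs_succ_eq (hn : m ≤ n) : primeSeqs m (n + 1) =
    widenLast '' primeSeqs m n ∪
      (· ++ [(n + 2 - m, n + 2)]) '' ⋃ i ∈ Finset.Ico 1 m, primeSeqs m (n - i) := by
  ext Γ
  constructor
  · intro hΓ
    obtain ⟨Δ, a, rfl, hw⟩ := eq_append_singleton hΓ
    by_cases ha : a + m ≤ n + 1
    · exact .inl ⟨Δ ++ [(a, n + 1)], hΓ.resizeLast ha, by simp [widenLast, List.modifyLast_concat]⟩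
    rcases Δ.eq_nil_or_concat' with rfl | ⟨Δ, p, rfl⟩
    · have := (isPrimeSeq_singleton_iff.mp hΓ).1
      simp only [Prod.mk.injEq] at this
      omega
    rw [mem_primeSeqs, List.append_assoc, List.singleton_append, isPrimeSeq_append_pair_iff] at hΓ
    obtain ⟨hΔ, ⟨-, -, h3, h4⟩, -⟩ := hΓ
    dsimp only at h3 h4
    refine .inr ⟨Δ ++ [p], Set.mem_iUnion₂.mpr ⟨n + 1 - p.2, Finset.mem_Ico.mpr ⟨by omega, by omega⟩,
      ?_⟩, ?_⟩
    · rwa [mem_primeSeqs, show n - (n + 1 - p.2) = p.2 - 1 by omega]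
    · simp only [List.append_assoc, List.singleton_append, List.append_cancel_left_eq,
        List.cons.injEq, Prod.mk.injEq, and_true, true_and]
      omega
  · rintro (⟨Γ, hΓ, rfl⟩ | ⟨Γ, hΓ, rfl⟩)
    · obtain ⟨Δ, a, rfl, hw⟩ := eq_append_singleton hΓ
      rw [widenLast, List.modifyLast_concat]
      exact hΓ.resizeLast (by omega)
    · obtain ⟨i, hi, hΓ⟩ := Set.mem_iUnion₂.mp hΓ
      rw [Finset.mem_Ico] at hi
      obtain ⟨Δ, b, rfl, hw⟩ := eq_append_singleton hΓ
      show IsPrimeSeq m (n + 1) (Δ ++ [(b, n - i + 1)] ++ [(n + 2 - m, n + 2)])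
      rw [List.append_assoc, List.singleton_append, isPrimeSeq_append_pair_iff]
      refine ⟨by simpa using hΓ, ⟨?_, ?_, ?_, ?_⟩, ?_, rfl⟩ <;> dsimp only <;> omega

theorem disjoint_widenLast_image_append (hn : m ≤ n) : Disjoint (widenLast '' primeSeqs m n)
    ((· ++ [(n + 2 - m, n + 2)]) '' ⋃ i ∈ Finset.Ico 1 m, primeSeqs m (n - i)) := by
  refine Set.disjoint_left.mpr ?_
  rintro _ ⟨Γ, hΓ, rfl⟩ ⟨Γ', -, h⟩
  obtain ⟨Δ, a, rfl, hw⟩ := eq_append_singleton hΓ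
  rw [widenLast, List.modifyLast_concat] at h
  have := (List.append_inj' h rfl).2
  simp only [List.cons.injEq, Prod.mk.injEq, and_true] at this
  omega

theorem encard_primeSeqs_succ (hm : 0 < m) (hn : m ≤ n) :
    (primeSeqs m (n + 1)).encard = ∑ i ∈ Finset.range m, (primeSeqs m (n - i)).encard := by
  have hdisj : (Finset.Ico 1 m : Set ℕ).PairwiseDisjoint fun i => primeSeqs m (n - i) := by
    intro i hi j hj hij
    refine Set.disjoint_left.mpr fun Γ hi' hj' => hij ?_
    have := unique hi' hj'
    simp only [Finset.coe_Ico, Set.mem_Ico] at hi hj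
    omega
  rw [primeSeqs_succ_eq hn, Set.encard_union_eq (disjoint_widenLast_image_append hn),
    widenLast_injective.encard_image, (List.append_left_injective _).encard_image,
    ← Finset.set_biUnion_coe, (Finset.finite_toSet _).encard_biUnion hdisj,
    finsum_mem_coe_finset, Finset.sum_range_eq_add_Ico _ hm, Nat.sub_zero]

theorem primeSeqs_finite (hm : 0 < m) (n : ℕ) : (primeSeqs m n).Finite := by
  induction n using Nat.strong_induction_on with
  | _ n ih =>
  rcases le_or_gt n m with hn | hn
  · rcases le_or_gt (n + 2) m with h | h
    · simp [primeSeqs_eq_empty h]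
    · simp [primeSeqs_eq_singleton (by omega) hn]
  · obtain ⟨k, rfl⟩ : ∃ k, n = k + 1 := ⟨n - 1, by omega⟩
    rw [← Set.encard_lt_top_iff, encard_primeSeqs_succ hm (by omega), ENat.sum_lt_top]
    exact fun i _ => Set.encard_lt_top_iff.mpr (ih _ (by omega))

theorem ncard_primeSeqs_succ (hm : 0 < m) (hn : m ≤ n) :
    (primeSeqs m (n + 1)).ncard = ∑ i ∈ Finset.range m, (primeSeqs m (n - i)).ncard := by
  apply Nat.cast_injective (R := ℕ∞)
  simp only [Nat.cast_sum, (primeSeqs_finite hm _).cast_ncard_eq]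
  exact encard_primeSeqs_succ hm hn

end Recurrence

/-- the number `f_m(n)` of prime sequences for the parameters `m`, `n`
vanishes for `1 ≤ n ≤ m - 2`, equals `1` for `n = m - 1` and `n = m`, and satisfies
the recurrence `f_m(n+1) = Σ_{i=0}^{m-1} f_m(n-i)` for `n ≥ m`. -/
theorem primeSeq_count_recurrence (m : ℕ) (hm : 2 ≤ m) :
    (∀ n, 1 ≤ n → n ≤ m - 2 → {Γ : List (ℕ × ℕ) | IsPrimeSeq m n Γ}.ncard = 0) ∧
    {Γ : List (ℕ × ℕ) | IsPrimeSeq m (m - 1) Γ}.ncard = 1 ∧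
    {Γ : List (ℕ × ℕ) | IsPrimeSeq m m Γ}.ncard = 1 ∧
    ∀ n, m ≤ n →
      {Γ : List (ℕ × ℕ) | IsPrimeSeq m (n + 1) Γ}.ncard =
        ∑ i ∈ Finset.range m, {Γ : List (ℕ × ℕ) | IsPrimeSeq m (n - i) Γ}.ncard := by
  simp only [← primeSeqs.eq_1]
  refine ⟨fun n _ hn => ?_, ?_, ?_, fun n hn => ncard_primeSeqs_succ (by omega) hn⟩
  · rw [primeSeqs_eq_empty (by omega), Set.ncard_empty]
  · rw [primeSeqs_eq_singleton (by omega) (by omega), Set.ncard_singleton]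
  · rw [primeSeqs_eq_singleton (by omega) (by omega), Set.ncard_singleton]
end
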